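/- arXiv:2011.04160 — 6 statements merged into one kernel-verified Lean document; each statement's English description precedes it below -/
import Mathlib

section
/- Let (G,m,w,B) be a connected weighted finite graph with boundary. Then for every i = 1, 2, …, |Ω|, the i-th Neumann eigenvalue dominates the i-th Laplacian eigenvalue: ν_i ≥ μ_i. -/
open Finset

noncomputable section

/-- The weighted graph Laplacian `Δ`. -/
def glap {V : Type*} [Fintype V] (m : V → ℝ) (w : V → V → ℝ) (u : V → ℝ) (x : V) : ℝ :=
  (1 / m x) * ∑ y, (u y - u x) * w x y

/-- Extension by zero to the boundary. -/
def E0 {V : Type*} [DecidableEq V] (B : Finset V) (u : {x : V // x ∉ B} → ℝ) (x : V) : ℝ :=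
  if h : x ∈ B then 0 else u ⟨x, h⟩

/-- The normal extension. -/
def N0 {V : Type*} [Fintype V] [DecidableEq V] (w : V → V → ℝ) (B : Finset V)
    (u : {x : V // x ∉ B} → ℝ) (x : V) : ℝ :=
  if h : x ∈ B then
    (∑ y : {x : V // x ∉ B}, u y * w x y.1) / (∑ y : {x : V // x ∉ B}, w x y.1)
  else u ⟨x, h⟩

/-- The Dirichlet Laplacian `Δ^D`. -/
def dlap {V : Type*} [Fintype V] [DecidableEq V] (m : V → ℝ) (w : V → V → ℝ) (B : Finset V)
    (u : {x : V // x ∉ B} → ℝ) (x : {x : V // x ∉ B}) : ℝ :=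
  glap m w (E0 B u) x.1

/-- The Neumann Laplacian `Δ^N`. -/
def nlap {V : Type*} [Fintype V] [DecidableEq V] (m : V → ℝ) (w : V → V → ℝ) (B : Finset V)
    (u : {x : V // x ∉ B} → ℝ) (x : {x : V // x ∉ B}) : ℝ :=
  glap m w (N0 w B u) x.1

/-- The Laplacian `Δ_Ω` of the induced interior subgraph. -/
def olap {V : Type*} [Fintype V] [DecidableEq V] (m : V → ℝ) (w : V → V → ℝ) (B : Finset V)
    (u : {x : V // x ∉ B} → ℝ) (x : {x : V // x ∉ B}) : ℝ :=
  (1 / m x.1) * ∑ y : {x : V // x ∉ B}, (u y - u x) * w x.1 y.1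

/-- The weighted boundary vertex degree `Deg_b`. -/
def degb {V : Type*} [DecidableEq V] (m : V → ℝ) (w : V → V → ℝ) (B : Finset V) (x : V) : ℝ :=
  (1 / m x) * ∑ y ∈ B, w x y

/-- The operator `T = A_B ∘ Deg⁻¹ ∘ A_Ω`. -/
def bop {V : Type*} [Fintype V] [DecidableEq V] (m : V → ℝ) (w : V → V → ℝ) (B : Finset V)
    (u : {x : V // x ∉ B} → ℝ) (z : {x : V // x ∉ B}) : ℝ :=
  (1 / m z.1) * ∑ x ∈ B, w x z.1 *
    ((∑ y : {x : V // x ∉ B}, u y * w x y.1) / (∑ y : {x : V // x ∉ B}, w x y.1))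

/-- The Bakry–Émery `Γ` operator of a Laplacian-type operator `L`. -/
def gam {W : Type*} (L : (W → ℝ) → (W → ℝ)) (f g : W → ℝ) (x : W) : ℝ :=
  (L (fun y => f y * g y) x - f x * L g x - g x * L f x) / 2

/-- The Bakry–Émery `Γ₂` operator of a Laplacian-type operator `L`. -/
def gam2 {W : Type*} (L : (W → ℝ) → (W → ℝ)) (f : W → ℝ) (x : W) : ℝ :=
  L (gam L f f) x / 2 - gam L f (L f) x

/-- `e` is a complete list of the eigenvalues of `L` : there is a corresponding eigenbasis
which is orthonormal with respect to the inner product weighted by `m`. -/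
def IsEigenBasis {n : ℕ} {W : Type*} [Fintype W] (m : W → ℝ)
    (L : (W → ℝ) → (W → ℝ)) (e : Fin n → ℝ) : Prop :=
  ∃ φ : Fin n → W → ℝ,
    (∀ i j, (∑ x, φ i x * φ j x * m x) = if i = j then 1 else 0) ∧
    ∀ i, L (φ i) = fun x => e i * φ i x

/-!
Min-max. The normal extension `N₀v` is harmonic on `B`, so Green's formula gives
`⟨-Δ N₀v, N₀v⟩ = ⟨-Δᴺv, v⟩_Ω`, while `‖v‖_Ω ≤ ‖N₀v‖`. Choosing `v ≠ 0` in the span of the first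
`i + 1` Neumann eigenfunctions with `N₀v` orthogonal to the first `i` eigenfunctions of `Δ` yields
`μᵢ ‖N₀v‖² ≤ ⟨-Δ N₀v, N₀v⟩ = ⟨-Δᴺv, v⟩_Ω ≤ νᵢ ‖v‖²_Ω ≤ νᵢ ‖N₀v‖²`, the last step because `νᵢ ≥ 0`.
-/

section WeightedInner

variable {W : Type*} [Fintype W]

def weightedInner (m : W → ℝ) : LinearMap.BilinForm ℝ (W → ℝ) :=
  LinearMap.mk₂ ℝ (fun f g => ∑ x, f x * g x * m x)
    (fun _ _ _ => by simp only [Pi.add_apply, add_mul, sum_add_distrib])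
    (fun _ _ _ => by simp only [Pi.smul_apply, smul_eq_mul, mul_sum, mul_assoc])
    (fun _ _ _ => by simp only [Pi.add_apply, mul_add, add_mul, sum_add_distrib])
    (fun _ _ _ => by
      simp only [Pi.smul_apply, smul_eq_mul, mul_sum]
      exact sum_congr rfl fun _ _ => by ring)

theorem weightedInner_apply (m : W → ℝ) (f g : W → ℝ) :
    weightedInner m f g = ∑ x, f x * g x * m x :=
  rfl

variable {ι : Type*} [Fintype ι] [DecidableEq ι] {m : W → ℝ} {φ : ι → W → ℝ}

theorem weightedInner_sum_smul_left
    (hφ : ∀ i j, weightedInner m (φ i) (φ j) = if i = j then 1 else 0) (c : ι → ℝ) (k : ι) :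
    weightedInner m (∑ j, c j • φ j) (φ k) = c k := by
  simp [map_sum, LinearMap.sum_apply, hφ]

theorem weightedInner_sum_smul_sum_smul
    (hφ : ∀ i j, weightedInner m (φ i) (φ j) = if i = j then 1 else 0) (c d : ι → ℝ) :
    weightedInner m (∑ j, c j • φ j) (∑ j, d j • φ j) = ∑ j, c j * d j := by
  simp [map_sum, hφ, mul_comm]

theorem linearIndependent_of_weightedInner_orthonormal
    (hφ : ∀ i j, weightedInner m (φ i) (φ j) = if i = j then 1 else 0) :
    LinearIndependent ℝ φ := by
  refine Fintype.linearIndependent_iff.mpr fun c hc k => ?_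
  rw [← weightedInner_sum_smul_left hφ c k, hc, map_zero, LinearMap.zero_apply]

theorem eq_sum_weightedInner_smul
    (hφ : ∀ i j, weightedInner m (φ i) (φ j) = if i = j then 1 else 0)
    (hcard : Fintype.card ι = Fintype.card W) (f : W → ℝ) :
    f = ∑ j, weightedInner m f (φ j) • φ j := by
  have hspan : Submodule.span ℝ (Set.range φ) = ⊤ :=
    (linearIndependent_of_weightedInner_orthonormal hφ).span_eq_top_of_card_eq_finrank'
      (by simp [hcard])
  obtain ⟨c, rfl⟩ := (Submodule.mem_span_range_iff_exists_fun ℝ).mp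
    (hspan ▸ Submodule.mem_top (x := f))
  simp only [weightedInner_sum_smul_left hφ]

variable {L : (W → ℝ) →ₗ[ℝ] (W → ℝ)} {e : ι → ℝ}

theorem neg_weightedInner_apply_sum_smul
    (hφ : ∀ i j, weightedInner m (φ i) (φ j) = if i = j then 1 else 0)
    (hL : ∀ j, L (φ j) = -e j • φ j) (c : ι → ℝ) :
    -weightedInner m (L (∑ j, c j • φ j)) (∑ j, c j • φ j) = ∑ j, e j * c j ^ 2 := by
  have hLc : L (∑ j, c j • φ j) = ∑ j, (c j * -e j) • φ j := by
    simp only [map_sum, map_smul, hL, smul_smul]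
  rw [hLc, weightedInner_sum_smul_sum_smul hφ, ← sum_neg_distrib]
  exact sum_congr rfl fun j _ => by ring

theorem neg_weightedInner_apply_le
    (hφ : ∀ i j, weightedInner m (φ i) (φ j) = if i = j then 1 else 0)
    (hL : ∀ j, L (φ j) = -e j • φ j) {Λ : ℝ} (he : ∀ j, e j ≤ Λ) (c : ι → ℝ) :
    -weightedInner m (L (∑ j, c j • φ j)) (∑ j, c j • φ j) ≤
      Λ * weightedInner m (∑ j, c j • φ j) (∑ j, c j • φ j) := by
  rw [neg_weightedInner_apply_sum_smul hφ hL, weightedInner_sum_smul_sum_smul hφ, mul_sum]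
  exact sum_le_sum fun j _ => by nlinarith [he j, sq_nonneg (c j)]

theorem le_neg_weightedInner_apply
    (hφ : ∀ i j, weightedInner m (φ i) (φ j) = if i = j then 1 else 0)
    (hcard : Fintype.card ι = Fintype.card W)
    (hL : ∀ j, L (φ j) = -e j • φ j) {Λ : ℝ} (f : W → ℝ)
    (he : ∀ j, weightedInner m f (φ j) ≠ 0 → Λ ≤ e j) :
    Λ * weightedInner m f f ≤ -weightedInner m (L f) f := by
  rw [eq_sum_weightedInner_smul hφ hcard f, neg_weightedInner_apply_sum_smul hφ hL,
    weightedInner_sum_smul_sum_smul hφ, mul_sum]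
  refine sum_le_sum fun j _ => ?_
  by_cases hj : weightedInner m f (φ j) = 0
  · simp [hj]
  · nlinarith [he j hj, mul_self_nonneg (weightedInner m f (φ j))]

end WeightedInner

theorem exists_ne_zero_forall_apply_eq_zero {K V : Type*} [Field K] [AddCommGroup V] [Module K V]
    [FiniteDimensional K V] {r : ℕ} (hr : r < Module.finrank K V) (ℓ : Fin r → V →ₗ[K] K) :
    ∃ v ≠ 0, ∀ k, ℓ k v = 0 := by
  obtain ⟨v, hv, hv0⟩ := Submodule.exists_mem_ne_zero_of_ne_bot
    (LinearMap.ker_ne_bot_of_finrank_lt (f := LinearMap.pi ℓ) (by simpa using hr))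
  exact ⟨v, hv0, fun k => congrFun (LinearMap.mem_ker.mp hv) k⟩

section GraphLaplacian

variable {V : Type*} [Fintype V] (m : V → ℝ) (w : V → V → ℝ)

def glapLinear : (V → ℝ) →ₗ[ℝ] (V → ℝ) where
  toFun := glap m w
  map_add' f g := funext fun x => by
    simp only [glap, Pi.add_apply, ← mul_add, ← sum_add_distrib]
    exact congrArg _ (sum_congr rfl fun y _ => by ring)
  map_smul' c f := funext fun x => by
    simp only [glap, Pi.smul_apply, smul_eq_mul, RingHom.id_apply, mul_sum]
    exact sum_congr rfl fun y _ => by ring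

variable {m w}

theorem weightedInner_glap_self (hm : ∀ x, m x ≠ 0) (hw : ∀ x y, w x y = w y x) (f : V → ℝ) :
    weightedInner m (glap m w f) f = -(∑ x, ∑ y, w x y * (f y - f x) ^ 2) / 2 := by
  have hx : weightedInner m (glap m w f) f = ∑ x, ∑ y, f x * (f y - f x) * w x y := by
    refine sum_congr rfl fun x _ => ?_
    rw [glap, mul_sum, sum_mul, sum_mul]
    refine sum_congr rfl fun y _ => ?_
    field_simp [hm x]
  have hy : weightedInner m (glap m w f) f = ∑ x, ∑ y, f y * (f x - f y) * w x y := by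
    rw [hx, sum_comm]
    exact sum_congr rfl fun x _ => sum_congr rfl fun y _ => by rw [hw]
  have hxy : ∑ x, ∑ y, f x * (f y - f x) * w x y + ∑ x, ∑ y, f y * (f x - f y) * w x y =
      -∑ x, ∑ y, w x y * (f y - f x) ^ 2 := by
    simp only [← sum_add_distrib, ← sum_neg_distrib]
    exact sum_congr rfl fun x _ => sum_congr rfl fun y _ => by ring
  linarith

theorem weightedInner_glap_self_nonpos (hm : ∀ x, m x ≠ 0) (hw : ∀ x y, w x y = w y x)
    (hw_nonneg : ∀ x y, 0 ≤ w x y) (f : V → ℝ) :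
    weightedInner m (glap m w f) f ≤ 0 := by
  rw [weightedInner_glap_self hm hw]
  have : 0 ≤ ∑ x, ∑ y, w x y * (f y - f x) ^ 2 :=
    sum_nonneg fun x _ => sum_nonneg fun y _ => mul_nonneg (hw_nonneg x y) (sq_nonneg _)
  linarith

variable [DecidableEq V]

section

variable (m w) (B : Finset V)

def N0Linear : ({x : V // x ∉ B} → ℝ) →ₗ[ℝ] (V → ℝ) where
  toFun := N0 w B
  map_add' u v := funext fun x => by
    by_cases hx : x ∈ B
    · simp only [N0, dif_pos hx, Pi.add_apply, add_mul, sum_add_distrib, add_div]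
    · simp only [N0, dif_neg hx, Pi.add_apply]
  map_smul' c u := funext fun x => by
    by_cases hx : x ∈ B
    · simp only [N0, dif_pos hx, Pi.smul_apply, smul_eq_mul, RingHom.id_apply, mul_assoc,
        ← mul_sum, mul_div_assoc]
    · simp only [N0, dif_neg hx, Pi.smul_apply, RingHom.id_apply]

def nlapLinear : ({x : V // x ∉ B} → ℝ) →ₗ[ℝ] ({x : V // x ∉ B} → ℝ) :=
  LinearMap.funLeft ℝ ℝ Subtype.val ∘ₗ glapLinear m w ∘ₗ N0Linear w B

end

variable {B : Finset V}

theorem N0_apply_coe (u : {x : V // x ∉ B} → ℝ) (x : {x : V // x ∉ B}) : N0 w B u x = u x :=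
  dif_neg x.2

/-- `N0 w B u x` is the `w`-average of the neighbours of `x`, all of which are interior. -/
theorem glap_N0_eq_zero_of_mem {x : V} (hx : x ∈ B) (hwB : ∀ y ∈ B, w x y = 0)
    (hdeg : ∑ y : {x : V // x ∉ B}, w x y ≠ 0) (u : {x : V // x ∉ B} → ℝ) :
    glap m w (N0 w B u) x = 0 := by
  have hsplit : ∑ y, (N0 w B u y - N0 w B u x) * w x y =
      ∑ y : {x : V // x ∉ B}, (u y - N0 w B u x) * w x y := by
    rw [← Fintype.sum_subtype_add_sum_subtype (· ∈ B)]
    refine (add_eq_right.mpr ?_).trans ?_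
    · exact sum_eq_zero fun y _ => by rw [hwB y y.2, mul_zero]
    · exact sum_congr rfl fun y _ => by rw [N0_apply_coe]
  have hNx : N0 w B u x * ∑ y : {x : V // x ∉ B}, w x y =
      ∑ y : {x : V // x ∉ B}, u y * w x y := by
    rw [N0, dif_pos hx, div_mul_cancel₀ _ hdeg]
  rw [glap, hsplit]
  simp only [sub_mul, sum_sub_distrib, ← mul_sum, hNx, sub_self, mul_zero]

theorem weightedInner_glap_N0 (hwB : ∀ x ∈ B, ∀ y ∈ B, w x y = 0)
    (hdeg : ∀ x ∈ B, ∑ y : {x : V // x ∉ B}, w x y ≠ 0) (u : {x : V // x ∉ B} → ℝ) :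
    weightedInner m (glap m w (N0 w B u)) (N0 w B u) =
      weightedInner (fun x : {x : V // x ∉ B} => m x) (nlap m w B u) u := by
  rw [weightedInner_apply, ← Fintype.sum_subtype_add_sum_subtype (· ∈ B)]
  refine (add_eq_right.mpr ?_).trans ?_
  · refine sum_eq_zero fun x _ => ?_
    rw [glap_N0_eq_zero_of_mem x.2 (hwB x x.2) (hdeg x x.2), zero_mul, zero_mul]
  · exact sum_congr rfl fun x _ => by rw [N0_apply_coe]; rfl

theorem weightedInner_le_weightedInner_N0 (hm : ∀ x, 0 ≤ m x) (u : {x : V // x ∉ B} → ℝ) :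
    weightedInner (fun x : {x : V // x ∉ B} => m x) u u ≤
      weightedInner m (N0 w B u) (N0 w B u) := by
  rw [weightedInner_apply m, ← Fintype.sum_subtype_add_sum_subtype (· ∈ B)]
  refine le_add_of_nonneg_of_le
    (sum_nonneg fun x _ => mul_nonneg (mul_self_nonneg _) (hm x)) (le_of_eq ?_)
  exact sum_congr rfl fun x _ => by rw [N0_apply_coe]

end GraphLaplacian

section Comparison

variable {W W' : Type*} [Fintype W] [Fintype W'] {m : W → ℝ} {m' : W' → ℝ}
  {L : (W → ℝ) →ₗ[ℝ] (W → ℝ)} {L' : (W' → ℝ) →ₗ[ℝ] (W' → ℝ)}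

theorem eigenvalue_le_of_rayleigh_comparison (T : (W' → ℝ) →ₗ[ℝ] (W → ℝ))
    {n' : ℕ} {ψ : Fin (Fintype.card W) → W → ℝ} {φ : Fin n' → W' → ℝ}
    {μ : Fin (Fintype.card W) → ℝ} {ν : Fin n' → ℝ}
    (hψo : ∀ k l, weightedInner m (ψ k) (ψ l) = if k = l then 1 else 0)
    (hψe : ∀ l, L (ψ l) = -μ l • ψ l) (hμ : Monotone μ)
    (hφo : ∀ j k, weightedInner m' (φ j) (φ k) = if j = k then 1 else 0)
    (hφe : ∀ j, L' (φ j) = -ν j • φ j) (hν : Monotone ν)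
    (hL : ∀ f, weightedInner m (L f) f ≤ 0)
    (hT : ∀ v, weightedInner m (L (T v)) (T v) = weightedInner m' (L' v) v)
    (hT_norm : ∀ v, weightedInner m' v v ≤ weightedInner m (T v) (T v))
    (i : Fin n') (hi : i.1 < Fintype.card W) :
    μ ⟨i.1, hi⟩ ≤ ν i := by
  have hνi : 0 ≤ ν i := by
    have h := hL (T (φ i))
    rw [hT, hφe, LinearMap.map_smul₂, hφo, if_pos rfl, smul_eq_mul, mul_one] at h
    linarith
  let φ' : Fin (i + 1) → W' → ℝ := fun j => φ (Fin.castLE i.2 j)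
  have hφ'o : ∀ j k, weightedInner m' (φ' j) (φ' k) = if j = k then 1 else 0 := fun j k => by
    simpa only [Fin.castLE_inj] using hφo (Fin.castLE i.2 j) (Fin.castLE i.2 k)
  obtain ⟨c, hc0, hc⟩ := exists_ne_zero_forall_apply_eq_zero (r := i) (by simp)
    fun l => (weightedInner m).flip (ψ (Fin.castLE hi.le l)) ∘ₗ T ∘ₗ
      Fintype.linearCombination ℝ φ'
  set v := ∑ j, c j • φ' j
  have hlow := le_neg_weightedInner_apply hψo (by simp) hψe (Λ := μ ⟨i.1, hi⟩) (T v)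
    fun l hl => hμ <| Fin.le_iff_val_le_val.mpr <| not_lt.mp fun hli => hl (hc ⟨l.1, hli⟩)
  have hup := neg_weightedInner_apply_le hφ'o (fun j => hφe (Fin.castLE i.2 j)) (Λ := ν i)
    (fun j => hν (Fin.le_iff_val_le_val.mpr (Nat.lt_succ_iff.mp j.2))) c
  have hv_pos : 0 < weightedInner m' v v := by
    rw [weightedInner_sum_smul_sum_smul hφ'o]
    obtain ⟨j, hj⟩ := Function.ne_iff.mp hc0
    exact sum_pos' (fun j _ => mul_self_nonneg _) ⟨j, mem_univ _, mul_self_pos.mpr hj⟩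
  have hchain : μ ⟨i.1, hi⟩ * weightedInner m (T v) (T v) ≤ ν i * weightedInner m (T v) (T v) :=
    calc _ ≤ -weightedInner m (L (T v)) (T v) := hlow
      _ = -weightedInner m' (L' v) v := by rw [hT]
      _ ≤ ν i * weightedInner m' v v := hup
      _ ≤ _ := mul_le_mul_of_nonneg_left (hT_norm v) hνi
  exact le_of_mul_le_mul_right hchain (hv_pos.trans_le (hT_norm v))

end Comparison

theorem stmt_0_general {V : Type*} [Fintype V] [DecidableEq V]
    (G : SimpleGraph V)
    (m : V → ℝ) (hm : ∀ x, 0 < m x)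
    (w : V → V → ℝ) (hwsymm : ∀ x y, w x y = w y x)
    (hwpos : ∀ x y, G.Adj x y → 0 < w x y)
    (hw0 : ∀ x y, ¬ G.Adj x y → w x y = 0)
    (B : Finset V)
    (hBB : ∀ x ∈ B, ∀ y ∈ B, ¬ G.Adj x y)
    (hBint : ∀ x ∈ B, ∃ y, y ∉ B ∧ G.Adj x y)
    (μ : Fin (Fintype.card V) → ℝ) (hμmono : Monotone μ)
    (hμ : IsEigenBasis m (glap m w) (fun i => -(μ i)))
    (ν : Fin (Fintype.card {x : V // x ∉ B}) → ℝ) (hνmono : Monotone ν)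
    (hν : IsEigenBasis (fun x : {x : V // x ∉ B} => m x.1) (nlap m w B) (fun i => -(ν i)))
    :
    ∀ i : Fin (Fintype.card {x : V // x ∉ B}), μ ⟨i.1, lt_of_lt_of_le i.2 (Fintype.card_subtype_le _)⟩ ≤ ν i := by
  obtain ⟨ψ, hψo, hψe⟩ := hμ
  obtain ⟨φ, hφo, hφe⟩ := hν
  have hw_nonneg : ∀ x y, 0 ≤ w x y := fun x y => by
    by_cases h : G.Adj x y
    · exact (hwpos x y h).le
    · exact (hw0 x y h).ge
  have hdeg : ∀ x ∈ B, ∑ y : {x : V // x ∉ B}, w x y ≠ 0 := fun x hx => by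
    obtain ⟨y, hyB, hxy⟩ := hBint x hx
    exact ne_of_gt <| sum_pos' (fun y _ => hw_nonneg x y) ⟨⟨y, hyB⟩, mem_univ _, hwpos x y hxy⟩
  exact fun i => eigenvalue_le_of_rayleigh_comparison (L := glapLinear m w)
    (L' := nlapLinear m w B) (N0Linear w B) hψo hψe hμmono hφo hφe hνmono
    (weightedInner_glap_self_nonpos (fun x => (hm x).ne') hwsymm hw_nonneg)
    (weightedInner_glap_N0 (fun x hx y hy => hw0 x y (hBB x hx y hy)) hdeg)
    (weightedInner_le_weightedInner_N0 (fun x => (hm x).le)) i _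

theorem stmt_0 {V : Type*} [Fintype V] [DecidableEq V]
    (G : SimpleGraph V) (hconn : G.Connected)
    (m : V → ℝ) (hm : ∀ x, 0 < m x)
    (w : V → V → ℝ) (hwsymm : ∀ x y, w x y = w y x)
    (hwpos : ∀ x y, G.Adj x y → 0 < w x y)
    (hw0 : ∀ x y, ¬ G.Adj x y → w x y = 0)
    (B : Finset V) (hB : B.Nonempty)
    (hBB : ∀ x ∈ B, ∀ y ∈ B, ¬ G.Adj x y)
    (hBint : ∀ x ∈ B, ∃ y, y ∉ B ∧ G.Adj x y)
    (μ : Fin (Fintype.card V) → ℝ) (hμmono : Monotone μ)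
    (hμ : IsEigenBasis m (glap m w) (fun i => -(μ i)))
    (ν : Fin (Fintype.card {x : V // x ∉ B}) → ℝ) (hνmono : Monotone ν)
    (hν : IsEigenBasis (fun x : {x : V // x ∉ B} => m x.1) (nlap m w B) (fun i => -(ν i)))
    :
    ∀ i : Fin (Fintype.card {x : V // x ∉ B}), μ ⟨i.1, lt_of_lt_of_le i.2 (Fintype.card_subtype_le _)⟩ ≤ ν i :=
  stmt_0_general G m hm w hwsymm hwpos hw0 B hBB hBint μ hμmono hμ ν hνmono hν
end
end

section
/- Let (G,m,w,B) be a connected weighted finite graph with boundary. If ν_i = μ_i for some i ∈ {2, 3, …, |Ω|}, then there exists a nonzero function u ∈ ℝ^V with u|_B = 0 and ∂u/∂n = 0 on B such that −Δu = μ_i u on V and −Δ^N(u|_Ω) = ν_i (u|_Ω); that is, u is simultaneously a Laplacian eigenfunction and (its restriction to Ω) a Neumann Laplacian eigenfunction for the common eigenvalue ν_i = μ_i. -/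
open Finset

noncomputable section

/-!
Choose a nonzero combination `v` of the first `i + 1` Neumann eigenfunctions whose extension
`u = N0 v` is orthogonal to the first `i` Laplacian eigenfunctions; it exists by counting
dimensions. Since `N0` extends by the weighted mean of the interior neighbours, `u` has vanishing
normal derivative, so the energy `⟨-Δu, u⟩` over `V` equals `⟨-Δᴺv, v⟩` over `Ω`, while
`‖u‖² = ‖u|_B‖² + ‖v‖²`. Writing `a` and `c` for the coefficients of `u` and `v` in the two
eigenbases and `λ = νᵢ = μᵢ`, this reads
`∑ⱼ (μⱼ - λ) aⱼ² + ∑ₜ (λ - νₜ) cₜ² + λ ‖u|_B‖² = 0`.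
Every term is nonnegative (`aⱼ = 0` for `j < i`, and `λ > 0` by connectedness), so all vanish:
`u = 0` on `B`, and only the eigenvalue `λ` occurs in either expansion.
-/

section Eigen

variable {W ι : Type*} [Fintype ι] {φ : ι → W → ℝ} {L : (W → ℝ) →ₗ[ℝ] (W → ℝ)} {e : ι → ℝ}

lemma map_sum_smul_of_eigen (hL : ∀ t, L (φ t) = e t • φ t) (c : ι → ℝ) :
    L (∑ t, c t • φ t) = ∑ t, (e t * c t) • φ t := by
  simp only [map_sum, map_smul, hL, smul_smul, mul_comm]

lemma map_eq_smul_of_forall_sub_mul_eq_zero (hL : ∀ t, L (φ t) = e t • φ t) {u : W → ℝ}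
    {c : ι → ℝ} (hu : u = ∑ t, c t • φ t) {κ : ℝ} (h : ∀ t, (e t - κ) * c t = 0) :
    L u = κ • u := by
  subst hu
  rw [map_sum_smul_of_eigen hL, smul_sum]
  refine sum_congr rfl fun t _ => ?_
  rw [smul_smul]
  congr 1
  linear_combination h t

end Eigen

section WeightedInner

variable {W : Type*} [Fintype W]

def wInner (m : W → ℝ) : (W → ℝ) →ₗ[ℝ] (W → ℝ) →ₗ[ℝ] ℝ :=
  LinearMap.mk₂ ℝ (fun f g => ∑ x, f x * g x * m x)
    (fun f f' g => by simp only [Pi.add_apply, add_mul, sum_add_distrib])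
    (fun c f g => by simp only [Pi.smul_apply, smul_eq_mul, mul_sum, mul_assoc])
    (fun f g g' => by simp only [Pi.add_apply, mul_add, add_mul, sum_add_distrib])
    (fun c f g => by
      simp only [Pi.smul_apply, smul_eq_mul, mul_sum]
      exact sum_congr rfl fun x _ => by ring)

lemma wInner_apply (m : W → ℝ) (f g : W → ℝ) : wInner m f g = ∑ x, f x * g x * m x := rfl

variable {m : W → ℝ} {ι : Type*} [Fintype ι] [DecidableEq ι] {φ : ι → W → ℝ}

lemma wInner_sum_smul_sum_smul (hφ : ∀ s t, wInner m (φ s) (φ t) = if s = t then 1 else 0)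
    (a b : ι → ℝ) : wInner m (∑ t, a t • φ t) (∑ t, b t • φ t) = ∑ t, a t * b t := by
  simp [map_sum, LinearMap.sum_apply, hφ, mul_comm]

lemma wInner_sum_smul_left (hφ : ∀ s t, wInner m (φ s) (φ t) = if s = t then 1 else 0)
    (c : ι → ℝ) (s : ι) : wInner m (∑ t, c t • φ t) (φ s) = c s := by
  simp [map_sum, LinearMap.sum_apply, hφ]

lemma eq_sum_wInner_smul_of_card_eq
    (hφ : ∀ s t, wInner m (φ s) (φ t) = if s = t then 1 else 0)
    (hcard : Fintype.card ι = Fintype.card W) (u : W → ℝ) :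
    u = ∑ t, wInner m u (φ t) • φ t := by
  have hli : LinearIndependent ℝ φ := Fintype.linearIndependent_iff.2 fun c hc s => by
    simpa [hc] using (wInner_sum_smul_left hφ c s).symm
  have hspan := hli.span_eq_top_of_card_eq_finrank' (by simpa using hcard)
  obtain ⟨c, rfl⟩ := (Submodule.mem_span_range_iff_exists_fun ℝ).1
    (hspan ▸ Submodule.mem_top : u ∈ Submodule.span ℝ (Set.range φ))
  simp only [wInner_sum_smul_left hφ]

lemma wInner_self_of_eq_sum (hφ : ∀ s t, wInner m (φ s) (φ t) = if s = t then 1 else 0)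
    {u : W → ℝ} {c : ι → ℝ} (hu : u = ∑ t, c t • φ t) : wInner m u u = ∑ t, c t ^ 2 := by
  subst hu
  simp only [wInner_sum_smul_sum_smul hφ, sq]

lemma wInner_map_self_of_eq_sum {L : (W → ℝ) →ₗ[ℝ] (W → ℝ)} {e : ι → ℝ}
    (hφ : ∀ s t, wInner m (φ s) (φ t) = if s = t then 1 else 0)
    (hL : ∀ t, L (φ t) = e t • φ t) {u : W → ℝ} {c : ι → ℝ} (hu : u = ∑ t, c t • φ t) :
    wInner m (L u) u = ∑ t, e t * c t ^ 2 := by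
  subst hu
  rw [map_sum_smul_of_eigen hL, wInner_sum_smul_sum_smul hφ]
  exact sum_congr rfl fun t _ => by ring

end WeightedInner

lemma mul_eq_zero_of_sum_mul_sq_eq_zero {ι : Type*} [Fintype ι] {d c : ι → ℝ}
    (hd : ∀ t, 0 ≤ d t * c t ^ 2) (hs : ∑ t, d t * c t ^ 2 = 0) (t : ι) : d t * c t = 0 := by
  have h := (sum_eq_zero_iff_of_nonneg fun t _ => hd t).1 hs t (mem_univ t)
  rcases mul_eq_zero.1 h with h | h
  · rw [h, zero_mul]
  · rw [pow_eq_zero_iff two_ne_zero |>.1 h, mul_zero]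

lemma exists_ne_zero_forall_map_sum_smul_eq_zero {K X ι κ : Type*} [Field K] [AddCommGroup X]
    [Module K X] [Fintype ι] [Fintype κ] (hcard : Fintype.card κ < Fintype.card ι)
    (ψ : ι → X) (ℓ : κ → X →ₗ[K] K) : ∃ c : ι → K, c ≠ 0 ∧ ∀ j, ℓ j (∑ t, c t • ψ t) = 0 := by
  let F : (ι → K) →ₗ[K] (κ → K) := LinearMap.pi fun j => ℓ j ∘ₗ Fintype.linearCombination K ψ
  obtain ⟨c, hc, hc0⟩ :=
    (Submodule.ne_bot_iff _).1 (LinearMap.ker_ne_bot_of_finrank_lt (f := F) (by simpa using hcard))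
  exact ⟨c, hc0, fun j => by
    simpa [F, Fintype.linearCombination_apply] using congr_fun (LinearMap.mem_ker.1 hc) j⟩

section Laplacian

variable {V : Type*} [Fintype V] {m : V → ℝ} {w : V → V → ℝ}

def glapLin (m : V → ℝ) (w : V → V → ℝ) : (V → ℝ) →ₗ[ℝ] (V → ℝ) where
  toFun := glap m w
  map_add' f g := by
    ext x
    simp only [glap, Pi.add_apply, ← mul_add, ← sum_add_distrib]
    exact congrArg _ (sum_congr rfl fun y _ => by ring)
  map_smul' c f := by
    ext x
    simp only [glap, Pi.smul_apply, smul_eq_mul, RingHom.id_apply, mul_sum]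
    exact sum_congr rfl fun y _ => by ring

lemma glapLin_apply (u : V → ℝ) : glapLin m w u = glap m w u := rfl

lemma wInner_glap_self (hm : ∀ x, m x ≠ 0) (hw : ∀ x y, w x y = w y x) (u : V → ℝ) :
    wInner m (glap m w u) u = -(∑ x, ∑ y, (u x - u y) ^ 2 * w x y) / 2 := by
  have hS : wInner m (glap m w u) u = ∑ x, ∑ y, (u y - u x) * u x * w x y := by
    simp only [wInner_apply, glap, mul_sum, sum_mul]
    exact sum_congr rfl fun x _ => sum_congr rfl fun y _ => by field_simp [hm x]
  have hswap : ∑ x, ∑ y, (u y - u x) * u x * w x y = ∑ x, ∑ y, (u x - u y) * u y * w x y := by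
    rw [sum_comm]
    exact sum_congr rfl fun x _ => sum_congr rfl fun y _ => by rw [hw]
  have hsq : ∑ x, ∑ y, (u x - u y) ^ 2 * w x y
      = -(∑ x, ∑ y, (u y - u x) * u x * w x y) - ∑ x, ∑ y, (u x - u y) * u y * w x y := by
    simp only [← sum_neg_distrib, ← sum_sub_distrib]
    exact sum_congr rfl fun x _ => sum_congr rfl fun y _ => by ring
  linarith

lemma wInner_glap_self_nonpos (hm : ∀ x, m x ≠ 0) (hw : ∀ x y, w x y = w y x)
    (hwnn : ∀ x y, 0 ≤ w x y) (u : V → ℝ) : wInner m (glap m w u) u ≤ 0 := by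
  rw [wInner_glap_self hm hw]
  have : 0 ≤ ∑ x, ∑ y, (u x - u y) ^ 2 * w x y :=
    sum_nonneg fun x _ => sum_nonneg fun y _ => mul_nonneg (sq_nonneg _) (hwnn x y)
  linarith

lemma eq_of_wInner_glap_self_eq_zero {G : SimpleGraph V} (hconn : G.Connected)
    (hm : ∀ x, m x ≠ 0) (hw : ∀ x y, w x y = w y x) (hwnn : ∀ x y, 0 ≤ w x y)
    (hwpos : ∀ x y, G.Adj x y → 0 < w x y) {u : V → ℝ} (h : wInner m (glap m w u) u = 0)
    (x y : V) : u x = u y := by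
  have hnn : ∀ x y, 0 ≤ (u x - u y) ^ 2 * w x y := fun x y => mul_nonneg (sq_nonneg _) (hwnn x y)
  have hzero : ∑ x, ∑ y, (u x - u y) ^ 2 * w x y = 0 := by
    rw [wInner_glap_self hm hw] at h
    linarith
  have hadj : ∀ x y, G.Adj x y → u x = u y := fun x y hxy => by
    have hx := (sum_eq_zero_iff_of_nonneg fun x _ => sum_nonneg fun y _ => hnn x y).1 hzero x
      (mem_univ x)
    have hxy' := (sum_eq_zero_iff_of_nonneg fun y _ => hnn x y).1 hx y (mem_univ y)
    simpa [sub_eq_zero, (hwpos x y hxy).ne'] using hxy'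
  obtain ⟨p⟩ := hconn.preconnected x y
  induction p with
  | nil => rfl
  | cons hxy _ ih => exact (hadj _ _ hxy).trans ih

end Laplacian

section Spectrum

variable {V : Type*} [Fintype V] {m : V → ℝ} {w : V → V → ℝ} {G : SimpleGraph V}

lemma glap_eigenvalue_nonneg (hm : ∀ x, m x ≠ 0) (hw : ∀ x y, w x y = w y x)
    (hwnn : ∀ x y, 0 ≤ w x y) {f : V → ℝ} {μ : ℝ} (hf : glap m w f = (-μ) • f)
    (hff : wInner m f f = 1) : 0 ≤ μ := by
  have h := wInner_glap_self_nonpos hm hw hwnn f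
  rw [hf, map_smul, LinearMap.smul_apply, hff, smul_eq_mul, mul_one] at h
  linarith

lemma glap_eigenvalue_pos (hconn : G.Connected) (hm : ∀ x, m x ≠ 0)
    (hw : ∀ x y, w x y = w y x) (hwnn : ∀ x y, 0 ≤ w x y)
    (hwpos : ∀ x y, G.Adj x y → 0 < w x y) {n : ℕ} {f : Fin n → V → ℝ} {μ : Fin n → ℝ}
    (hμ : Monotone μ) (hf : ∀ s t, wInner m (f s) (f t) = if s = t then 1 else 0)
    (hfeig : ∀ j, glap m w (f j) = (-μ j) • f j) (j : Fin n) (hj : 1 ≤ j.1) : 0 < μ j := by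
  let j₀ : Fin n := ⟨0, by omega⟩
  let j₁ : Fin n := ⟨1, by omega⟩
  refine lt_of_lt_of_le ?_ (hμ (show j₁ ≤ j from hj))
  by_contra! hle
  obtain ⟨x₀⟩ := hconn.nonempty
  have hconst : ∀ k, μ k ≤ 0 → f k = fun _ => f k x₀ := fun k hk => funext fun x => by
    have hk0 : μ k = 0 :=
      le_antisymm hk (glap_eigenvalue_nonneg hm hw hwnn (hfeig k) (by simpa using hf k k))
    refine eq_of_wInner_glap_self_eq_zero hconn hm hw hwnn hwpos ?_ x x₀
    rw [hfeig k, hk0, neg_zero, zero_smul, map_zero, LinearMap.zero_apply]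
  have h₀ := hf j₀ j₀
  have h₁ := hf j₁ j₁
  have h₀₁ := hf j₀ j₁
  rw [hconst j₀ ((hμ (show j₀ ≤ j₁ from Nat.zero_le _)).trans hle)] at h₀ h₀₁
  rw [hconst j₁ hle] at h₁ h₀₁
  have hne : j₀ ≠ j₁ := by simp [j₀, j₁, Fin.ext_iff]
  rw [if_pos rfl] at h₀ h₁
  rw [if_neg hne] at h₀₁
  simp only [wInner_apply, ← mul_sum] at h₀ h₁ h₀₁
  nlinarith

end Spectrum

section Boundary

variable {V : Type*} [Fintype V] [DecidableEq V] {m : V → ℝ} {w : V → V → ℝ} {B : Finset V}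

def N0Lin (w : V → V → ℝ) (B : Finset V) : ({x : V // x ∉ B} → ℝ) →ₗ[ℝ] (V → ℝ) where
  toFun := N0 w B
  map_add' u v := by
    ext x
    by_cases hx : x ∈ B <;> simp [N0, hx, add_mul, sum_add_distrib, add_div]
  map_smul' c u := by
    ext x
    by_cases hx : x ∈ B <;> simp [N0, hx, mul_assoc, ← mul_sum, mul_div_assoc]

def nlapLin (m : V → ℝ) (w : V → V → ℝ) (B : Finset V) :
    ({x : V // x ∉ B} → ℝ) →ₗ[ℝ] ({x : V // x ∉ B} → ℝ) :=
  LinearMap.funLeft ℝ ℝ Subtype.val ∘ₗ glapLin m w ∘ₗ N0Lin w B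

lemma nlapLin_apply (v : {x : V // x ∉ B} → ℝ) : nlapLin m w B v = nlap m w B v := rfl

@[simp]
lemma N0_val (v : {x : V // x ∉ B} → ℝ) (x : {x : V // x ∉ B}) : N0 w B v x = v x := by
  simp [N0, x.2]

lemma N0_ne_zero {v : {x : V // x ∉ B} → ℝ} (hv : v ≠ 0) : N0 w B v ≠ 0 :=
  fun h => hv (funext fun x => by rw [← N0_val (w := w) v x, h, Pi.zero_apply, Pi.zero_apply])

lemma glap_N0_of_mem (hwB : ∀ x ∈ B, ∀ y ∈ B, w x y = 0)
    (hD : ∀ x ∈ B, ∑ y : {x : V // x ∉ B}, w x y ≠ 0) (v : {x : V // x ∉ B} → ℝ) {x : V}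
    (hx : x ∈ B) : glap m w (N0 w B v) x = 0 := by
  rw [glap, ← Fintype.sum_subtype_add_sum_subtype (· ∈ B),
    sum_eq_zero fun y _ => by rw [hwB x hx y y.2, mul_zero], zero_add]
  simp only [N0_val, sub_mul, sum_sub_distrib, ← mul_sum]
  rw [N0, dif_pos hx, div_mul_cancel₀ _ (hD x hx), sub_self, mul_zero]

lemma wInner_glap_N0_self (hwB : ∀ x ∈ B, ∀ y ∈ B, w x y = 0)
    (hD : ∀ x ∈ B, ∑ y : {x : V // x ∉ B}, w x y ≠ 0) (v : {x : V // x ∉ B} → ℝ) :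
    wInner m (glap m w (N0 w B v)) (N0 w B v)
      = wInner (fun x : {x : V // x ∉ B} => m x) (nlap m w B v) v := by
  rw [wInner_apply, ← Fintype.sum_subtype_add_sum_subtype (· ∈ B),
    sum_eq_zero fun x _ => by rw [glap_N0_of_mem hwB hD v x.2, zero_mul, zero_mul], zero_add]
  simp only [N0_val]
  rfl

lemma wInner_N0_self (v : {x : V // x ∉ B} → ℝ) :
    wInner m (N0 w B v) (N0 w B v)
      = ∑ x ∈ B, N0 w B v x ^ 2 * m x + wInner (fun x : {x : V // x ∉ B} => m x) v v := by
  rw [wInner_apply, wInner_apply, ← sum_add_sum_compl B,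
    sum_subtype (p := (· ∉ B)) (F := inferInstance) Bᶜ fun _ => mem_compl]
  simp only [N0_val, sq]

end Boundary

section Comparison

variable {V : Type*} [Fintype V] [DecidableEq V] {m : V → ℝ} {w : V → V → ℝ} {B : Finset V}
  {n : ℕ} {f : Fin n → V → ℝ} {μ : Fin n → ℝ}
  {ι : Type*} [Fintype ι] [DecidableEq ι] {ψ : ι → {x : V // x ∉ B} → ℝ} {ν : ι → ℝ}

lemma sum_eigen_defects_eq_zero (hwB : ∀ x ∈ B, ∀ y ∈ B, w x y = 0)
    (hD : ∀ x ∈ B, ∑ y : {x : V // x ∉ B}, w x y ≠ 0) (hn : n = Fintype.card V)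
    (hf : ∀ s t, wInner m (f s) (f t) = if s = t then 1 else 0)
    (hfeig : ∀ j, glapLin m w (f j) = (-μ j) • f j)
    (hψ : ∀ s t, wInner (fun x : {x : V // x ∉ B} => m x) (ψ s) (ψ t) = if s = t then 1 else 0)
    (hψeig : ∀ t, nlapLin m w B (ψ t) = (-ν t) • ψ t) {c : ι → ℝ} {v : {x : V // x ∉ B} → ℝ}
    (hv : v = ∑ t, c t • ψ t) (κ : ℝ) :
    ∑ j, (μ j - κ) * wInner m (N0 w B v) (f j) ^ 2 + ∑ t, (κ - ν t) * c t ^ 2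
      + κ * ∑ x ∈ B, N0 w B v x ^ 2 * m x = 0 := by
  have hu := eq_sum_wInner_smul_of_card_eq hf (by simp [hn]) (N0 w B v)
  have hEu := wInner_map_self_of_eq_sum hf hfeig hu
  have hNu := wInner_self_of_eq_sum hf hu
  have hEv := wInner_map_self_of_eq_sum hψ hψeig hv
  have hNv := wInner_self_of_eq_sum hψ hv
  have hbridge := wInner_glap_N0_self (m := m) hwB hD v
  have hsplit := wInner_N0_self (m := m) (w := w) v
  simp only [glapLin_apply, nlapLin_apply, neg_mul, sum_neg_distrib] at hEu hEv
  simp only [sub_mul, sum_sub_distrib, ← mul_sum]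
  linear_combination hEu - hEv - hbridge + κ * (hNu - hNv - hsplit)

lemma N0_common_eigenfunction (hm : ∀ x, 0 < m x) (hwB : ∀ x ∈ B, ∀ y ∈ B, w x y = 0)
    (hD : ∀ x ∈ B, ∑ y : {x : V // x ∉ B}, w x y ≠ 0) (hn : n = Fintype.card V)
    (hf : ∀ s t, wInner m (f s) (f t) = if s = t then 1 else 0)
    (hfeig : ∀ j, glapLin m w (f j) = (-μ j) • f j)
    (hψ : ∀ s t, wInner (fun x : {x : V // x ∉ B} => m x) (ψ s) (ψ t) = if s = t then 1 else 0)
    (hψeig : ∀ t, nlapLin m w B (ψ t) = (-ν t) • ψ t) {c : ι → ℝ} {v : {x : V // x ∉ B} → ℝ}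
    (hv : v = ∑ t, c t • ψ t) {κ : ℝ} (hκ : 0 < κ)
    (horth : ∀ j, μ j < κ → wInner m (N0 w B v) (f j) = 0) (hν : ∀ t, ν t ≤ κ) :
    (∀ x ∈ B, N0 w B v x = 0) ∧ glap m w (N0 w B v) = (-κ) • N0 w B v ∧
      nlap m w B v = (-κ) • v := by
  set a := fun j => wInner m (N0 w B v) (f j)
  have ha : ∀ j, 0 ≤ (μ j - κ) * a j ^ 2 := fun j => by
    rcases lt_or_ge (μ j) κ with h | h
    · simp [a, horth j h]
    · exact mul_nonneg (sub_nonneg.2 h) (sq_nonneg _)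
  have hc : ∀ t, 0 ≤ (κ - ν t) * c t ^ 2 := fun t => mul_nonneg (sub_nonneg.2 (hν t)) (sq_nonneg _)
  have hB : ∀ x ∈ B, 0 ≤ N0 w B v x ^ 2 * m x := fun x _ => mul_nonneg (sq_nonneg _) (hm x).le
  have hsum := sum_eigen_defects_eq_zero hwB hD hn hf hfeig hψ hψeig hv κ
  have hsa := sum_nonneg fun j (_ : j ∈ univ) => ha j
  have hsc := sum_nonneg fun t (_ : t ∈ univ) => hc t
  have hsB := mul_nonneg hκ.le (sum_nonneg hB)
  refine ⟨fun x hx => ?_, ?_, ?_⟩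
  · have hzero : ∑ x ∈ B, N0 w B v x ^ 2 * m x = 0 :=
      (mul_eq_zero.1 (by linarith)).resolve_left hκ.ne'
    have hx0 := (sum_eq_zero_iff_of_nonneg hB).1 hzero x hx
    exact pow_eq_zero_iff two_ne_zero |>.1 ((mul_eq_zero.1 hx0).resolve_right (hm x).ne')
  · refine map_eq_smul_of_forall_sub_mul_eq_zero hfeig
      (eq_sum_wInner_smul_of_card_eq hf (by simp [hn]) _) fun j => ?_
    linear_combination -mul_eq_zero_of_sum_mul_sq_eq_zero ha (by linarith) j
  · refine map_eq_smul_of_forall_sub_mul_eq_zero hψeig hv fun t => ?_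
    linear_combination mul_eq_zero_of_sum_mul_sq_eq_zero hc (by linarith) t

end Comparison

theorem stmt_1_general {V : Type*} [Fintype V] [DecidableEq V]
    (G : SimpleGraph V) (hconn : G.Connected)
    (m : V → ℝ) (hm : ∀ x, 0 < m x)
    (w : V → V → ℝ) (hwsymm : ∀ x y, w x y = w y x)
    (hwpos : ∀ x y, G.Adj x y → 0 < w x y)
    (hw0 : ∀ x y, ¬ G.Adj x y → w x y = 0)
    (B : Finset V)
    (hBB : ∀ x ∈ B, ∀ y ∈ B, ¬ G.Adj x y)
    (hBint : ∀ x ∈ B, ∃ y, y ∉ B ∧ G.Adj x y)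
    (μ : Fin (Fintype.card V) → ℝ) (hμmono : Monotone μ)
    (hμ : IsEigenBasis m (glap m w) (fun i => -(μ i)))
    (ν : Fin (Fintype.card {x : V // x ∉ B}) → ℝ) (hνmono : Monotone ν)
    (hν : IsEigenBasis (fun x : {x : V // x ∉ B} => m x.1) (nlap m w B) (fun i => -(ν i)))
    (i : Fin (Fintype.card {x : V // x ∉ B})) (hi : 1 ≤ i.1)
    (heq : ν i = μ ⟨i.1, lt_of_lt_of_le i.2 (Fintype.card_subtype_le _)⟩)
    :
    ∃ u : V → ℝ, u ≠ 0 ∧ (∀ x ∈ B, u x = 0) ∧ (∀ x ∈ B, glap m w u x = 0) ∧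
      (∀ x, glap m w u x = -(μ ⟨i.1, lt_of_lt_of_le i.2 (Fintype.card_subtype_le _)⟩) * u x) ∧
      (∀ x : {x : V // x ∉ B}, nlap m w B (fun y => u y.1) x = -(ν i) * u x.1) := by
  obtain ⟨f, hf, hfeig⟩ := hμ
  obtain ⟨ψ, hψ, hψeig⟩ := hν
  set k : Fin (Fintype.card V) := ⟨i.1, lt_of_lt_of_le i.2 (Fintype.card_subtype_le _)⟩
  have hwnn : ∀ x y, 0 ≤ w x y := fun x y =>
    (em (G.Adj x y)).elim (fun h => (hwpos x y h).le) fun h => (hw0 x y h).ge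
  have hwB : ∀ x ∈ B, ∀ y ∈ B, w x y = 0 := fun x hx y hy => hw0 x y (hBB x hx y hy)
  have hD : ∀ x ∈ B, ∑ y : {x : V // x ∉ B}, w x y ≠ 0 := fun x hx => by
    obtain ⟨y, hy, hxy⟩ := hBint x hx
    exact (sum_pos' (fun z _ => hwnn x z.1) ⟨⟨y, hy⟩, mem_univ _, hwpos x y hxy⟩).ne'
  have hκ : 0 < ν i := heq ▸
    glap_eigenvalue_pos hconn (fun x => (hm x).ne') hwsymm hwnn hwpos hμmono hf hfeig k hi
  let ψ' := fun t : Fin (i.1 + 1) => ψ (Fin.castLE i.2 t)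
  have hψ' : ∀ s t, wInner (fun x : {x : V // x ∉ B} => m x) (ψ' s) (ψ' t)
      = if s = t then 1 else 0 := fun s t => (hψ _ _).trans (by simp)
  obtain ⟨c, hc, horth⟩ := exists_ne_zero_forall_map_sum_smul_eq_zero (by simp) ψ'
    fun j : Fin i.1 => (wInner m).flip (f (Fin.castLE k.2.le j)) ∘ₗ N0Lin w B
  obtain ⟨hB0, hglap, hnlap⟩ := N0_common_eigenfunction hm hwB hD rfl hf hfeig hψ'
    (fun t => hψeig _) rfl hκ (fun j hj => horth ⟨j, hμmono.reflect_lt (heq ▸ hj)⟩)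
    (fun t => hνmono (Nat.lt_succ_iff.1 t.2))
  refine ⟨_, N0_ne_zero fun hv => hc ?_, hB0, fun x hx => glap_N0_of_mem hwB hD _ hx,
    fun x => by rw [hglap, ← heq]; rfl, fun x => by simp only [N0_val, hnlap]; rfl⟩
  funext s
  simpa [hv] using (wInner_sum_smul_left hψ' c s).symm

theorem stmt_1 {V : Type*} [Fintype V] [DecidableEq V]
    (G : SimpleGraph V) (hconn : G.Connected)
    (m : V → ℝ) (hm : ∀ x, 0 < m x)
    (w : V → V → ℝ) (hwsymm : ∀ x y, w x y = w y x)
    (hwpos : ∀ x y, G.Adj x y → 0 < w x y)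
    (hw0 : ∀ x y, ¬ G.Adj x y → w x y = 0)
    (B : Finset V) (hB : B.Nonempty)
    (hBB : ∀ x ∈ B, ∀ y ∈ B, ¬ G.Adj x y)
    (hBint : ∀ x ∈ B, ∃ y, y ∉ B ∧ G.Adj x y)
    (μ : Fin (Fintype.card V) → ℝ) (hμmono : Monotone μ)
    (hμ : IsEigenBasis m (glap m w) (fun i => -(μ i)))
    (ν : Fin (Fintype.card {x : V // x ∉ B}) → ℝ) (hνmono : Monotone ν)
    (hν : IsEigenBasis (fun x : {x : V // x ∉ B} => m x.1) (nlap m w B) (fun i => -(ν i)))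
    (i : Fin (Fintype.card {x : V // x ∉ B})) (hi : 1 ≤ i.1)
    (heq : ν i = μ ⟨i.1, lt_of_lt_of_le i.2 (Fintype.card_subtype_le _)⟩)
    :
    ∃ u : V → ℝ, u ≠ 0 ∧ (∀ x ∈ B, u x = 0) ∧ (∀ x ∈ B, glap m w u x = 0) ∧
      (∀ x, glap m w u x = -(μ ⟨i.1, lt_of_lt_of_le i.2 (Fintype.card_subtype_le _)⟩) * u x) ∧
      (∀ x : {x : V // x ∉ B}, nlap m w B (fun y => u y.1) x = -(ν i) * u x.1) :=
  stmt_1_general G hconn m hm w hwsymm hwpos hw0 B hBB hBint μ hμmono hμ ν hνmono hν i hi heq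
end
end

section
/- Let (G,m,w,B) be a connected weighted finite graph with boundary. If ν_i = μ_i for every i = 1, 2, …, |Ω|, then there exists a positive function ρ : B → (0,∞) such that w_{xy} = ρ_x m_x m_y for every x ∈ B and y ∈ Ω; in particular, every boundary vertex is adjacent to every interior vertex. -/
open Finset

noncomputable section

lemma green_sym {V : Type*} [Fintype V] (w : V → V → ℝ) (hwsymm : ∀ x y, w x y = w y x)
    (f : V → ℝ) :
    ∑ x, f x * (∑ y, (f y - f x) * w x y)
      = -(1/2) * ∑ x, ∑ y, (f y - f x)^2 * w x y := by
  have swap : ∑ x, ∑ y, (f y - f x) * f y * w x y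
      = -∑ x, ∑ y, (f y - f x) * f x * w x y := by
    rw [Finset.sum_comm, ← Finset.sum_neg_distrib]
    refine Finset.sum_congr rfl fun a _ => ?_
    rw [← Finset.sum_neg_distrib]
    refine Finset.sum_congr rfl fun b _ => ?_
    rw [hwsymm b a]; ring
  have expand : ∑ x, ∑ y, (f y - f x)^2 * w x y
      = (∑ x, ∑ y, (f y - f x) * f y * w x y) - ∑ x, ∑ y, (f y - f x) * f x * w x y := by
    rw [← Finset.sum_sub_distrib]
    refine Finset.sum_congr rfl fun a _ => ?_
    rw [← Finset.sum_sub_distrib]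
    refine Finset.sum_congr rfl fun b _ => ?_
    ring
  have lhs : ∑ x, f x * (∑ y, (f y - f x) * w x y)
      = ∑ x, ∑ y, (f y - f x) * f x * w x y := by
    refine Finset.sum_congr rfl fun a _ => ?_
    rw [Finset.mul_sum]
    refine Finset.sum_congr rfl fun b _ => ?_
    ring
  rw [lhs, expand, swap]; ring

lemma form_eq_energy {V : Type*} [Fintype V] (m : V → ℝ) (hm : ∀ x, m x ≠ 0)
    (w : V → V → ℝ) (hwsymm : ∀ x y, w x y = w y x) (f : V → ℝ) :
    ∑ x, (-(glap m w f x)) * f x * m x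
      = (1/2) * ∑ x, ∑ y, (f y - f x)^2 * w x y := by
  have : ∀ x, (-(glap m w f x)) * f x * m x = -(f x * ∑ y, (f y - f x) * w x y) := by
    intro x; unfold glap; field_simp [hm x]
  rw [Finset.sum_congr rfl fun x _ => this x, Finset.sum_neg_distrib,
    green_sym w hwsymm f]
  ring

lemma energy_nonneg {V : Type*} [Fintype V] (w : V → V → ℝ) (hwnn : ∀ x y, 0 ≤ w x y)
    (f : V → ℝ) : 0 ≤ ∑ x, ∑ y, (f y - f x)^2 * w x y :=
  Finset.sum_nonneg fun x _ => Finset.sum_nonneg fun y _ =>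
    mul_nonneg (sq_nonneg _) (hwnn x y)

lemma const_of_energy_zero {V : Type*} [Fintype V] (G : SimpleGraph V) (hconn : G.Connected)
    (w : V → V → ℝ) (hwpos : ∀ x y, G.Adj x y → 0 < w x y) (hwnn : ∀ x y, 0 ≤ w x y)
    (f : V → ℝ) (hE : ∑ x, ∑ y, (f y - f x)^2 * w x y = 0) :
    ∀ x y, f x = f y := by
  have hadj : ∀ x y, G.Adj x y → f x = f y := by
    intro x y hxy
    have h1 : ∀ x ∈ (univ : Finset V), (0:ℝ) ≤ ∑ y, (f y - f x)^2 * w x y :=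
      fun x _ => Finset.sum_nonneg fun y _ => mul_nonneg (sq_nonneg _) (hwnn x y)
    have h2 := (Finset.sum_eq_zero_iff_of_nonneg h1).1 hE x (mem_univ x)
    have h3 : ∀ y ∈ (univ : Finset V), (0:ℝ) ≤ (f y - f x)^2 * w x y :=
      fun y _ => mul_nonneg (sq_nonneg _) (hwnn x y)
    have h4 := (Finset.sum_eq_zero_iff_of_nonneg h3).1 h2 y (mem_univ y)
    have hw := hwpos x y hxy
    have : (f y - f x)^2 = 0 := by
      by_contra hne
      exact hne (by nlinarith [sq_nonneg (f y - f x)])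
    nlinarith [this]
  intro x y
  obtain ⟨p⟩ := hconn.preconnected x y
  induction p with
  | nil => rfl
  | cons hadj' p ih => exact (hadj _ _ hadj').trans ih

lemma completeness {n : ℕ} {W : Type*} [Fintype W] [DecidableEq W]
    (hn : n = Fintype.card W) (m : W → ℝ) (hm : ∀ x, m x ≠ 0)
    (ψ : Fin n → W → ℝ)
    (ho : ∀ i j, (∑ x, ψ i x * ψ j x * m x) = if i = j then 1 else 0) :
    ∀ x y : W, (∑ i, ψ i x * ψ i y) * m x = if x = y then 1 else 0 := by
  classical
  set P : Matrix (Fin n) W ℝ := Matrix.of fun i x => ψ i x with hP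
  set Q : Matrix W (Fin n) ℝ := Matrix.of fun x i => ψ i x * m x with hQ
  have hPQ : P * Q = 1 := by
    ext i j
    rw [Matrix.mul_apply, Matrix.one_apply]
    calc ∑ x, P i x * Q x j = ∑ x, ψ i x * ψ j x * m x := by
          refine Finset.sum_congr rfl fun x _ => ?_
          simp [hP, hQ]; ring
      _ = _ := ho i j
  have hQP : Q * P = 1 :=
    (Matrix.mul_eq_one_comm_of_equiv (Fintype.equivFinOfCardEq hn.symm).symm).1 hPQ
  intro x y
  have := congrFun (congrFun hQP x) y
  rw [Matrix.mul_apply, Matrix.one_apply] at this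
  calc (∑ i, ψ i x * ψ i y) * m x = ∑ i, Q x i * P i y := by
        rw [Finset.sum_mul]
        refine Finset.sum_congr rfl fun i _ => ?_
        simp [hP, hQ]; ring
    _ = _ := this

lemma glap_lin {V : Type*} [Fintype V] {k : ℕ} (m : V → ℝ) (w : V → V → ℝ)
    (c : Fin k → ℝ) (g : Fin k → V → ℝ) :
    glap m w (fun x => ∑ i, c i * g i x) = fun x => ∑ i, c i * glap m w (g i) x := by
  funext x
  unfold glap
  have step1 : ∑ y, ((∑ i, c i * g i y) - ∑ i, c i * g i x) * w x y
      = ∑ y, ∑ i, c i * ((g i y - g i x) * w x y) := by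
    refine Finset.sum_congr rfl fun y _ => ?_
    rw [← Finset.sum_sub_distrib, Finset.sum_mul]
    refine Finset.sum_congr rfl fun i _ => ?_
    ring
  rw [step1, Finset.sum_comm, Finset.mul_sum]
  refine Finset.sum_congr rfl fun i _ => ?_
  rw [← Finset.mul_sum, Finset.mul_sum]
  ring_nf
  rw [Finset.mul_sum, Finset.mul_sum]
  refine Finset.sum_congr rfl fun y _ => ?_
  ring

lemma sum_cast_eq_sum_ite {n k : ℕ} (hk : k ≤ n) (F : Fin n → ℝ) :
    ∑ j : Fin k, F ⟨j.1, lt_of_lt_of_le j.2 hk⟩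
      = ∑ i : Fin n, (if (i : ℕ) < k then F i else 0) := by
  rw [← Finset.sum_filter]
  refine Finset.sum_bij' (fun (j : Fin k) (_ : j ∈ univ) => (⟨j.1, lt_of_lt_of_le j.2 hk⟩ : Fin n))
    (fun (i : Fin n) (hi : i ∈ univ.filter (fun i : Fin n => (i : ℕ) < k)) =>
      (⟨i.1, (Finset.mem_filter.1 hi).2⟩ : Fin k)) ?_ ?_ ?_ ?_ ?_ <;>
    simp

lemma kyfan {V : Type*} [Fintype V] [DecidableEq V] {n k : ℕ}
    (hn : n = Fintype.card V) (hk : k ≤ n) (hk1 : 1 ≤ k)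
    (m : V → ℝ) (hm : ∀ x, m x ≠ 0)
    (w : V → V → ℝ)
    (μ : Fin n → ℝ) (hmono : Monotone μ)
    (ψ : Fin n → V → ℝ)
    (ho : ∀ i j, (∑ x, ψ i x * ψ j x * m x) = if i = j then 1 else 0)
    (heig : ∀ i, glap m w (ψ i) = fun x => -(μ i) * ψ i x)
    (f : Fin k → V → ℝ)
    (hf : ∀ j l, (∑ x, f j x * f l x * m x) = if j = l then 1 else 0) :
    ∑ j : Fin k, μ ⟨j.1, lt_of_lt_of_le j.2 hk⟩
      ≤ ∑ j : Fin k, ∑ x, (-(glap m w (f j) x)) * f j x * m x := by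
  classical
  set b : Fin k → Fin n → ℝ := fun j i => ∑ x, f j x * ψ i x * m x with hb
  have comp := completeness hn m hm ψ ho
  -- expansion of f in the eigenbasis
  have hexp : ∀ j x, f j x = ∑ i, b j i * ψ i x := by
    intro j x
    have step1 : f j x = ∑ y, f j y * ((∑ i, ψ i y * ψ i x) * m y) := by
      simp_rw [comp]
      simp [mul_ite]
    have step2 : ∀ y, f j y * ((∑ i, ψ i y * ψ i x) * m y)
        = ∑ i, (f j y * ψ i y * m y) * ψ i x := by
      intro y
      rw [Finset.sum_mul, Finset.mul_sum]
      refine Finset.sum_congr rfl fun i _ => ?_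
      ring
    rw [step1]
    simp_rw [step2]
    rw [Finset.sum_comm]
    refine Finset.sum_congr rfl fun i _ => ?_
    rw [hb, ← Finset.sum_mul]
  -- Parseval
  have hpars : ∀ j l, ∑ i, b j i * b l i = if j = l then 1 else 0 := by
    intro j l
    have e : ∀ i, b j i * b l i = ∑ y, (b j i * ψ i y) * (f l y * m y) := by
      intro i
      have : b l i = ∑ y, f l y * ψ i y * m y := rfl
      rw [this, Finset.mul_sum]
      refine Finset.sum_congr rfl fun y _ => ?_
      ring
    simp_rw [e]
    rw [Finset.sum_comm]
    have e2 : ∀ y, ∑ i, (b j i * ψ i y) * (f l y * m y) = f j y * f l y * m y := by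
      intro y
      rw [← Finset.sum_mul, ← hexp j y]
      ring
    simp_rw [e2]
    rw [hf j l]
  -- quadratic form expansion
  have hform : ∀ j, ∑ x, (-(glap m w (f j) x)) * f j x * m x = ∑ i, μ i * (b j i)^2 := by
    intro j
    have hfj : f j = fun x => ∑ i, b j i * ψ i x := funext (hexp j)
    have hg : glap m w (f j) = fun x => ∑ i, b j i * (-(μ i) * ψ i x) := by
      conv_lhs => rw [hfj]
      rw [glap_lin]
      funext x
      refine Finset.sum_congr rfl fun i _ => ?_
      rw [heig i]
    rw [hg]
    have step1 : ∀ x, (-(∑ i, b j i * (-(μ i) * ψ i x))) * f j x * m x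
        = ∑ i, (b j i * μ i) * (ψ i x * f j x * m x) := by
      intro x
      rw [← Finset.sum_neg_distrib, Finset.sum_mul, Finset.sum_mul]
      refine Finset.sum_congr rfl fun i _ => ?_
      ring
    simp_rw [step1]
    rw [Finset.sum_comm]
    refine Finset.sum_congr rfl fun i _ => ?_
    rw [← Finset.mul_sum]
    have : ∑ x, ψ i x * f j x * m x = b j i := by
      rw [hb]
      refine Finset.sum_congr rfl fun x _ => ?_
      ring
    rw [this]; ring
  -- the weights t i
  set t : Fin n → ℝ := fun i => ∑ j, (b j i)^2 with htdef
  have ht0 : ∀ i, 0 ≤ t i := fun i => Finset.sum_nonneg fun j _ => sq_nonneg _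
  have htsum : ∑ i, t i = (k : ℝ) := by
    rw [Finset.sum_comm]
    have : ∀ j : Fin k, ∑ i, (b j i)^2 = 1 := by
      intro j
      have h2 := hpars j j
      simp only [if_pos] at h2
      rw [← h2]
      exact Finset.sum_congr rfl fun i _ => pow_two (b j i)
    simp_rw [this]
    simp
  have ht1 : ∀ i, t i ≤ 1 := by
    intro i
    set P : Fin n → ℝ := fun p => ∑ j, b j i * b j p with hPdef
    have hPP : ∑ p, P p * P p = P i := by
      have step1 : ∑ p, P p * P p
          = ∑ j, ∑ l, (b j i * b l i) * (∑ p, b j p * b l p) := by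
        have e1 : ∀ p, P p * P p = ∑ j, ∑ l, (b j i * b j p) * (b l i * b l p) := by
          intro p
          rw [hPdef]
          rw [Finset.sum_mul_sum]
        simp_rw [e1]
        rw [Finset.sum_comm]
        refine Finset.sum_congr rfl fun j _ => ?_
        rw [Finset.sum_comm]
        refine Finset.sum_congr rfl fun l _ => ?_
        rw [Finset.mul_sum]
        refine Finset.sum_congr rfl fun p _ => ?_
        ring
      rw [step1]
      have step2 : ∀ j : Fin k, ∑ l, (b j i * b l i) * (∑ p, b j p * b l p)
          = b j i * b j i := by
        intro j
        have e2 : ∀ l, (b j i * b l i) * (∑ p, b j p * b l p)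
            = if j = l then b j i * b l i else 0 := by
          intro l
          rw [hpars j l]
          by_cases hjl : j = l <;> simp [hjl]
        simp_rw [e2]
        simp
      simp_rw [step2]
      rfl
    have hti : t i = P i := by
      rw [htdef, hPdef]
      refine Finset.sum_congr rfl fun j _ => pow_two (b j i)
    have hsq : (P i)^2 ≤ ∑ p, P p * P p := by
      have : ∀ p ∈ (univ : Finset (Fin n)), (0:ℝ) ≤ P p * P p := fun p _ => mul_self_nonneg _
      have := Finset.single_le_sum this (mem_univ i)
      nlinarith
    rw [hti]
    nlinarith [hPP, hsq, ht0 i, hti]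
  -- the threshold argument
  have hkn : k - 1 < n := by omega
  set θ := μ ⟨k - 1, hkn⟩ with hθ
  have key : ∀ i : Fin n, (if (i : ℕ) < k then μ i else 0)
      ≤ μ i * t i - θ * t i + θ * (if (i : ℕ) < k then 1 else 0) := by
    intro i
    by_cases hik : (i : ℕ) < k
    · simp only [hik, if_true]
      have hle : μ i ≤ θ := hmono (by simp [Fin.le_def]; omega)
      nlinarith [ht1 i, ht0 i]
    · simp only [hik, if_false]
      have hge : θ ≤ μ i := hmono (by simp [Fin.le_def]; omega)
      nlinarith [ht0 i]
  have hsum1 := sum_cast_eq_sum_ite hk μ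
  have hsumone : ∑ i : Fin n, (if (i : ℕ) < k then (1:ℝ) else 0) = (k : ℝ) := by
    have := sum_cast_eq_sum_ite hk (fun _ => (1:ℝ))
    rw [← this]
    simp
  calc ∑ j : Fin k, μ ⟨j.1, lt_of_lt_of_le j.2 hk⟩
      = ∑ i : Fin n, (if (i : ℕ) < k then μ i else 0) := hsum1
    _ ≤ ∑ i : Fin n, (μ i * t i - θ * t i + θ * (if (i : ℕ) < k then 1 else 0)) :=
        Finset.sum_le_sum fun i _ => key i
    _ = ∑ i, μ i * t i - θ * (∑ i, t i) + θ * ∑ i : Fin n, (if (i : ℕ) < k then (1:ℝ) else 0) := by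
        rw [Finset.sum_add_distrib, Finset.sum_sub_distrib, Finset.mul_sum, Finset.mul_sum]
    _ = ∑ i, μ i * t i := by rw [htsum, hsumone]; ring
    _ = ∑ j : Fin k, ∑ i, μ i * (b j i)^2 := by
        rw [Finset.sum_comm]
        refine Finset.sum_congr rfl fun i _ => ?_
        rw [htdef, ← Finset.mul_sum]
    _ = ∑ j : Fin k, ∑ x, (-(glap m w (f j) x)) * f j x * m x := by
        refine Finset.sum_congr rfl fun j _ => (hform j).symm

lemma divhelp (dx S mx my : ℝ) (h1 : mx ≠ 0) (h2 : S ≠ 0) :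
    dx / (S * mx) * mx * my = my * dx / S := by
  field_simp

theorem stmt_2 {V : Type*} [Fintype V] [DecidableEq V]
    (G : SimpleGraph V) (hconn : G.Connected)
    (m : V → ℝ) (hm : ∀ x, 0 < m x)
    (w : V → V → ℝ) (hwsymm : ∀ x y, w x y = w y x)
    (hwpos : ∀ x y, G.Adj x y → 0 < w x y)
    (hw0 : ∀ x y, ¬ G.Adj x y → w x y = 0)
    (B : Finset V) (hB : B.Nonempty)
    (hBB : ∀ x ∈ B, ∀ y ∈ B, ¬ G.Adj x y)
    (hBint : ∀ x ∈ B, ∃ y, y ∉ B ∧ G.Adj x y)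
    (μ : Fin (Fintype.card V) → ℝ) (hμmono : Monotone μ)
    (hμ : IsEigenBasis m (glap m w) (fun i => -(μ i)))
    (ν : Fin (Fintype.card {x : V // x ∉ B}) → ℝ) (hνmono : Monotone ν)
    (hν : IsEigenBasis (fun x : {x : V // x ∉ B} => m x.1) (nlap m w B) (fun i => -(ν i)))
    (h : ∀ i : Fin (Fintype.card {x : V // x ∉ B}), ν i = μ ⟨i.1, lt_of_lt_of_le i.2 (Fintype.card_subtype_le _)⟩)
    :
    ∃ ρ : V → ℝ, (∀ x ∈ B, 0 < ρ x) ∧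
      (∀ x ∈ B, ∀ y ∉ B, w x y = ρ x * m x * m y) ∧
      (∀ x ∈ B, ∀ y ∉ B, G.Adj x y) := by
  classical
  obtain ⟨ψ, hψo, hψe⟩ := hμ
  obtain ⟨φ, hφo, hφe⟩ := hν
  have hφo' : ∀ i j, (∑ y : {x : V // x ∉ B}, φ i y * φ j y * m y.1) = if i = j then 1 else 0 :=
    fun i j => by simpa using hφo i j
  have hφe' : ∀ i (y : {x : V // x ∉ B}), glap m w (N0 w B (φ i)) y.1 = -(ν i) * φ i y :=
    fun i y => by simpa [nlap] using congrFun (hφe i) y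
  have hmne : ∀ x, m x ≠ 0 := fun x => (hm x).ne'
  have hwnn : ∀ x y, 0 ≤ w x y := by
    intro x y
    by_cases hadj : G.Adj x y
    · exact (hwpos x y hadj).le
    · rw [hw0 x y hadj]
  have hΩne : Nonempty {x : V // x ∉ B} := by
    obtain ⟨x0, hx0⟩ := hB
    obtain ⟨y0, hy0, _⟩ := hBint x0 hx0
    exact ⟨⟨y0, hy0⟩⟩
  have hk1 : 1 ≤ Fintype.card {x : V // x ∉ B} := Fintype.card_pos_iff.mpr hΩne
  have hkn : Fintype.card {x : V // x ∉ B} ≤ Fintype.card V := Fintype.card_subtype_le _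
  have hwB : ∀ x ∈ B, ∀ y ∈ B, w x y = 0 := by
    intro x hx y hy
    exact hw0 x y (hBB x hx y hy)
  -- the split of a full sum into boundary and interior parts
  have hsplit : ∀ F : V → ℝ, ∑ x, F x = (∑ x ∈ B, F x) + ∑ y : {x : V // x ∉ B}, F y.1 := by
    intro F
    rw [← Finset.sum_add_sum_compl B F]
    congr 1
    exact Finset.sum_subtype Bᶜ (fun x => Finset.mem_compl) F
  have hd : ∀ x ∈ B, 0 < ∑ y : {x : V // x ∉ B}, w x y.1 := by
    intro x hx
    obtain ⟨y0, hy0, hadj⟩ := hBint x hx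
    refine Finset.sum_pos' (fun y _ => hwnn x y.1) ⟨⟨y0, hy0⟩, mem_univ _, hwpos x y0 hadj⟩
  -- the harmonic extensions of the Neumann eigenfunctions
  set vv : Fin (Fintype.card {x : V // x ∉ B}) → V → ℝ := fun i => N0 w B (φ i) with hvv
  have hvΩ : ∀ i (y : {x : V // x ∉ B}), vv i y.1 = φ i y := by
    intro i y
    simp only [hvv, N0, dif_neg y.2]
  have hvB : ∀ i x, x ∈ B →
      vv i x = (∑ y : {x : V // x ∉ B}, φ i y * w x y.1) / (∑ y : {x : V // x ∉ B}, w x y.1) := by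
    intro i x hx
    simp only [hvv, N0, dif_pos hx]
  have hvBd : ∀ i x, x ∈ B →
      vv i x * (∑ y : {x : V // x ∉ B}, w x y.1) = ∑ y : {x : V // x ∉ B}, φ i y * w x y.1 := by
    intro i x hx
    rw [hvB i x hx, div_mul_cancel₀]
    exact (hd x hx).ne'
  -- harmonicity at the boundary
  have hharm : ∀ i x, x ∈ B → glap m w (vv i) x = 0 := by
    intro i x hx
    unfold glap
    rw [hsplit fun y => (vv i y - vv i x) * w x y]
    have hBpart : ∑ y ∈ B, (vv i y - vv i x) * w x y = 0 :=
      Finset.sum_eq_zero fun y hy => by rw [hwB x hx y hy, mul_zero]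
    have hΩpart : ∑ y : {x : V // x ∉ B}, (vv i y.1 - vv i x) * w x y.1 = 0 := by
      have : ∀ y : {x : V // x ∉ B}, (vv i y.1 - vv i x) * w x y.1
          = φ i y * w x y.1 - vv i x * w x y.1 := by
        intro y; rw [hvΩ i y]; ring
      rw [Finset.sum_congr rfl fun y _ => this y, Finset.sum_sub_distrib,
        ← Finset.mul_sum, hvBd i x hx, sub_self]
    rw [hBpart, hΩpart]
    ring
  -- eigen-equation in the interior
  have heigv : ∀ i (y : {x : V // x ∉ B}), glap m w (vv i) y.1 = -(ν i) * φ i y := by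
    intro i y
    exact hφe' i y
  -- form matrix is diagonal
  have hQ : ∀ i l, ∑ x, (-(glap m w (vv i) x)) * vv l x * m x
      = (if i = l then 1 else 0) * ν i := by
    intro i l
    rw [hsplit fun x => (-(glap m w (vv i) x)) * vv l x * m x]
    have hBpart : ∑ x ∈ B, (-(glap m w (vv i) x)) * vv l x * m x = 0 :=
      Finset.sum_eq_zero fun x hx => by rw [hharm i x hx]; ring
    have hΩpart : ∑ y : {x : V // x ∉ B}, (-(glap m w (vv i) y.1)) * vv l y.1 * m y.1
        = (if i = l then 1 else 0) * ν i := by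
      have : ∀ y : {x : V // x ∉ B}, (-(glap m w (vv i) y.1)) * vv l y.1 * m y.1
          = ν i * (φ i y * φ l y * m y.1) := by
        intro y; rw [heigv i y, hvΩ l y]; ring
      rw [Finset.sum_congr rfl fun y _ => this y, ← Finset.mul_sum, hφo' i l]
      ring
    rw [hBpart, hΩpart, zero_add]
  -- Gram matrix
  have hGram : ∀ i l, ∑ x, vv i x * vv l x * m x
      = (if i = l then 1 else 0) + ∑ x ∈ B, vv i x * vv l x * m x := by
    intro i l
    rw [hsplit fun x => vv i x * vv l x * m x]
    have hΩpart : ∑ y : {x : V // x ∉ B}, vv i y.1 * vv l y.1 * m y.1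
        = if i = l then 1 else 0 := by
      rw [← hφo' i l]
      exact Finset.sum_congr rfl fun y _ => by rw [hvΩ i y, hvΩ l y]
    rw [hΩpart]
    ring
  -- nonnegativity of ν
  have hνform : ∀ i, ν i = ∑ x, (-(glap m w (vv i) x)) * vv i x * m x := by
    intro i
    rw [hQ i i, if_pos rfl, one_mul]
  have hνnn : ∀ i, 0 ≤ ν i := by
    intro i
    rw [hνform i, form_eq_energy m hmne w hwsymm]
    have := energy_nonneg w hwnn (vv i)
    linarith
  -- Gram matrix
  set Gm : Matrix (Fin (Fintype.card {x : V // x ∉ B})) (Fin (Fintype.card {x : V // x ∉ B})) ℝ :=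
    Matrix.of fun i l => ∑ x, vv i x * vv l x * m x with hGm
  have hGmapp : ∀ i l, Gm i l = ∑ x, vv i x * vv l x * m x := fun i l => rfl
  have hGsymm' : ∀ i l, Gm i l = Gm l i := by
    intro i l
    rw [hGmapp, hGmapp]
    exact Finset.sum_congr rfl fun x _ => by ring
  have hquad : ∀ z : Fin (Fintype.card {x : V // x ∉ B}) → ℝ,
      ∑ i, ∑ l, z i * z l * Gm i l
        = (∑ i, (z i)^2) + ∑ x ∈ B, (∑ i, z i * vv i x)^2 * m x := by
    intro z
    have e1 : ∀ i l, z i * z l * Gm i l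
        = (if i = l then z i * z l else 0) + ∑ x ∈ B, (z i * vv i x) * (z l * vv l x) * m x := by
      intro i l
      rw [hGmapp, hGram i l, mul_add, Finset.mul_sum]
      congr 1
      · by_cases hil : i = l <;> simp [hil]
      · exact Finset.sum_congr rfl fun x _ => by ring
    simp_rw [e1, Finset.sum_add_distrib]
    congr 1
    · refine Finset.sum_congr rfl fun i _ => ?_
      rw [Finset.sum_ite_eq univ i (fun l => z i * z l)]
      simp [pow_two]
    · calc ∑ i, ∑ l, ∑ x ∈ B, (z i * vv i x) * (z l * vv l x) * m x
          = ∑ i, ∑ x ∈ B, ∑ l, (z i * vv i x) * (z l * vv l x) * m x := by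
            exact Finset.sum_congr rfl fun i _ => Finset.sum_comm
        _ = ∑ x ∈ B, ∑ i, ∑ l, (z i * vv i x) * (z l * vv l x) * m x := Finset.sum_comm
        _ = ∑ x ∈ B, (∑ i, z i * vv i x)^2 * m x := by
            refine Finset.sum_congr rfl fun x _ => ?_
            rw [pow_two, Finset.sum_mul_sum, Finset.sum_mul]
            refine Finset.sum_congr rfl fun i _ => ?_
            rw [Finset.sum_mul]
  -- positive definiteness
  have hdot : ∀ z : Fin (Fintype.card {x : V // x ∉ B}) → ℝ,
      dotProduct (star z) (Gm.mulVec z) = ∑ i, ∑ l, z i * z l * Gm i l := by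
    intro z
    rw [dotProduct]
    refine Finset.sum_congr rfl fun i _ => ?_
    rw [Matrix.mulVec, dotProduct, Finset.mul_sum]
    refine Finset.sum_congr rfl fun l _ => ?_
    simp only [Pi.star_apply, star_trivial]
    ring
  have hGpd : Gm.PosDef := by
    refine Matrix.PosDef.of_dotProduct_mulVec_pos ?_ ?_
    · refine Matrix.ext fun i l => ?_
      rw [Matrix.conjTranspose_apply, star_trivial]
      exact (hGsymm' i l).symm
    · intro z hz
      rw [hdot z, hquad z]
      obtain ⟨i0, hi0⟩ := Function.ne_iff.1 hz
      have h1 : 0 < ∑ i, (z i)^2 := by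
        refine Finset.sum_pos' (fun i _ => sq_nonneg _) ⟨i0, mem_univ _, ?_⟩
        have : z i0 ≠ 0 := hi0
        rcases this.lt_or_gt with hlt | hlt <;> nlinarith
      have h2 : 0 ≤ ∑ x ∈ B, (∑ i, z i * vv i x)^2 * m x :=
        Finset.sum_nonneg fun x _ => mul_nonneg (sq_nonneg _) (hm x).le
      linarith
  have hGdet : IsUnit Gm.det := by
    rw [isUnit_iff_ne_zero]
    exact hGpd.det_pos.ne'
  have hGinv_right : Gm * Gm⁻¹ = 1 := Matrix.mul_nonsing_inv _ hGdet
  have hGinv_left : Gm⁻¹ * Gm = 1 := Matrix.nonsing_inv_mul _ hGdet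
  have hGinvpd : (Gm⁻¹).PosDef := hGpd.inv
  open scoped MatrixOrder in set A := CFC.sqrt (Gm⁻¹) with hAdef
  open scoped MatrixOrder in have hAA : A * A = Gm⁻¹ := CFC.sqrt_mul_sqrt_self (Gm⁻¹) (Matrix.PosSemidef.nonneg (Matrix.PosDef.posSemidef hGinvpd))
  open scoped MatrixOrder in have hAherm : A.IsHermitian := Matrix.PosSemidef.isHermitian (Matrix.nonneg_iff_posSemidef.mp (CFC.sqrt_nonneg (Gm⁻¹)))
  have hAs : ∀ i l, A i l = A l i := by
    intro i l
    have h1 := congrFun (congrFun hAherm i) l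
    rw [Matrix.conjTranspose_apply, star_trivial] at h1
    exact h1.symm
  have hAGA : A * Gm * A = 1 := by
    have h1 : A * A * Gm = 1 := by rw [hAA]; exact hGinv_left
    rw [Matrix.mul_assoc] at h1
    exact mul_eq_one_comm.mp h1
  -- the orthonormalized family
  set ff : Fin (Fintype.card {x : V // x ∉ B}) → V → ℝ :=
    fun j x => ∑ i, A i j * vv i x with hff
  have hforth : ∀ j l, (∑ x, ff j x * ff l x * m x) = if j = l then 1 else 0 := by
    intro j l
    have step1 : ∀ x, ff j x * ff l x * m x
        = ∑ i, ∑ p, (A i j * A p l) * (vv i x * vv p x * m x) := by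
      intro x
      show (∑ i, A i j * vv i x) * (∑ p, A p l * vv p x) * m x = _
      rw [Finset.sum_mul_sum, Finset.sum_mul]
      refine Finset.sum_congr rfl fun i _ => ?_
      rw [Finset.sum_mul]
      refine Finset.sum_congr rfl fun p _ => ?_
      ring
    have step2 : (A * Gm * A) j l = ∑ p, ∑ i, (A i j * A p l) * Gm i p := by
      rw [Matrix.mul_apply]
      refine Finset.sum_congr rfl fun p _ => ?_
      rw [Matrix.mul_apply, Finset.sum_mul]
      refine Finset.sum_congr rfl fun i _ => ?_
      rw [hAs j i]
      ring
    calc ∑ x, ff j x * ff l x * m x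
        = ∑ x, ∑ i, ∑ p, (A i j * A p l) * (vv i x * vv p x * m x) :=
          Finset.sum_congr rfl fun x _ => step1 x
      _ = ∑ i, ∑ p, ∑ x, (A i j * A p l) * (vv i x * vv p x * m x) := by
          rw [Finset.sum_comm]
          exact Finset.sum_congr rfl fun i _ => Finset.sum_comm
      _ = ∑ i, ∑ p, (A i j * A p l) * Gm i p := by
          refine Finset.sum_congr rfl fun i _ => Finset.sum_congr rfl fun p _ => ?_
          rw [← Finset.mul_sum, hGmapp]
      _ = (A * Gm * A) j l := by rw [step2, Finset.sum_comm]
      _ = (1 : Matrix _ _ ℝ) j l := by rw [hAGA]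
      _ = if j = l then 1 else 0 := Matrix.one_apply
  -- quadratic form on the orthonormalized family
  have hformff : ∀ j, ∑ x, (-(glap m w (ff j) x)) * ff j x * m x = ∑ i, ν i * (A i j)^2 := by
    intro j
    have hglapff : glap m w (ff j) = fun x => ∑ i, A i j * glap m w (vv i) x :=
      glap_lin m w (fun i => A i j) vv
    simp_rw [hglapff]
    have step1 : ∀ x, (-(∑ i, A i j * glap m w (vv i) x)) * ff j x * m x
        = ∑ i, A i j * ((-(glap m w (vv i) x)) * ff j x * m x) := by
      intro x
      rw [← Finset.sum_neg_distrib, Finset.sum_mul, Finset.sum_mul]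
      refine Finset.sum_congr rfl fun i _ => ?_
      ring
    simp_rw [step1]
    rw [Finset.sum_comm]
    refine Finset.sum_congr rfl fun i _ => ?_
    rw [← Finset.mul_sum]
    have step2 : ∑ x, (-(glap m w (vv i) x)) * ff j x * m x = A i j * ν i := by
      have e : ∀ x, (-(glap m w (vv i) x)) * ff j x * m x
          = ∑ p, A p j * ((-(glap m w (vv i) x)) * vv p x * m x) := by
        intro x
        show (-(glap m w (vv i) x)) * (∑ p, A p j * vv p x) * m x = _
        rw [Finset.mul_sum, Finset.sum_mul]
        refine Finset.sum_congr rfl fun p _ => ?_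
        ring
      simp_rw [e]
      rw [Finset.sum_comm]
      have e2 : ∀ p, ∑ x, A p j * ((-(glap m w (vv i) x)) * vv p x * m x)
          = if i = p then A p j * ν i else 0 := by
        intro p
        rw [← Finset.mul_sum, hQ i p]
        by_cases hip : i = p <;> simp [hip]
      simp_rw [e2]
      rw [Finset.sum_ite_eq univ i (fun p => A p j * ν i)]
      simp
    rw [step2]
    ring
  have hsumform : ∑ j, ∑ i, ν i * (A i j)^2 = ∑ i, ν i * Gm⁻¹ i i := by
    rw [Finset.sum_comm]
    refine Finset.sum_congr rfl fun i _ => ?_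
    rw [← Finset.mul_sum]
    congr 1
    have : Gm⁻¹ i i = (A * A) i i := by rw [hAA]
    rw [this, Matrix.mul_apply]
    refine Finset.sum_congr rfl fun j _ => ?_
    rw [pow_two, hAs j i]
  -- Ky Fan and the equality chain
  have hψe' : ∀ i, glap m w (ψ i) = fun x => -(μ i) * ψ i x := fun i => hψe i
  have hKF := kyfan rfl hkn hk1 m hmne w μ hμmono ψ hψo hψe' ff hforth
  have hνμ : ∑ j, ν j = ∑ j : Fin (Fintype.card {x : V // x ∉ B}),
      μ ⟨j.1, lt_of_lt_of_le j.2 hkn⟩ :=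
    Finset.sum_congr rfl fun j _ => h j
  have hchain : ∑ j, ν j ≤ ∑ i, ν i * Gm⁻¹ i i := by
    rw [hνμ]
    calc ∑ j : Fin (Fintype.card {x : V // x ∉ B}), μ ⟨j.1, lt_of_lt_of_le j.2 hkn⟩
        ≤ ∑ j, ∑ x, (-(glap m w (ff j) x)) * ff j x * m x := hKF
      _ = ∑ j, ∑ i, ν i * (A i j)^2 := Finset.sum_congr rfl fun j _ => hformff j
      _ = ∑ i, ν i * Gm⁻¹ i i := hsumform
  -- column analysis of the inverse Gram matrix
  have hcol : ∀ i, Gm⁻¹ i i ≤ 1 ∧ (Gm⁻¹ i i = 1 → ∀ x ∈ B, vv i x = 0) := by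
    intro i
    set u : Fin (Fintype.card {x : V // x ∉ B}) → ℝ := fun l => Gm⁻¹ l i with hu
    have hGu : ∀ l, ∑ p, Gm l p * u p = if l = i then 1 else 0 := by
      intro l
      have h1 := congrFun (congrFun hGinv_right l) i
      rw [Matrix.mul_apply] at h1
      calc ∑ p, Gm l p * u p = ∑ p, Gm l p * Gm⁻¹ p i := rfl
        _ = (1 : Matrix _ _ ℝ) l i := h1
        _ = if l = i then 1 else 0 := Matrix.one_apply
    have hui : ∑ l, u l * (∑ p, Gm l p * u p) = u i := by
      simp_rw [hGu, mul_ite, mul_one, mul_zero]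
      rw [Finset.sum_ite_eq' univ i u]
      simp
    have hquadu : ∑ l, u l * (∑ p, Gm l p * u p) = ∑ l, ∑ p, u l * u p * Gm l p := by
      refine Finset.sum_congr rfl fun l _ => ?_
      rw [Finset.mul_sum]
      refine Finset.sum_congr rfl fun p _ => ?_
      ring
    have hkey : u i = (∑ l, (u l)^2) + ∑ x ∈ B, (∑ l, u l * vv l x)^2 * m x := by
      rw [← hui, hquadu, hquad u]
    have hBnn : 0 ≤ ∑ x ∈ B, (∑ l, u l * vv l x)^2 * m x :=
      Finset.sum_nonneg fun x _ => mul_nonneg (sq_nonneg _) (hm x).le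
    have husq : (u i)^2 ≤ ∑ l, (u l)^2 :=
      Finset.single_le_sum (fun l _ => sq_nonneg (u l)) (mem_univ i)
    constructor
    · show u i ≤ 1
      have h1 : (u i)^2 ≤ u i := by linarith
      nlinarith [h1, sq_nonneg (u i - 1)]
    · intro heq x hx
      have hui1 : u i = 1 := heq
      have hui2 : (u i)^2 = 1 := by rw [hui1]; norm_num
      have husq1 : 1 ≤ ∑ l, (u l)^2 := by linarith
      have hS : ∑ l, (u l)^2 = 1 := by linarith
      have hT : ∑ x ∈ B, (∑ l, u l * vv l x)^2 * m x = 0 := by linarith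
      have hsums : ∑ l, (u l)^2 = 1 ∧ ∑ x ∈ B, (∑ l, u l * vv l x)^2 * m x = 0 := ⟨hS, hT⟩
      have hul : ∀ l, l ≠ i → u l = 0 := by
        intro l hl
        have hsplit2 := Finset.add_sum_erase univ (fun p => (u p)^2) (mem_univ i)
        have h0 : ∑ p ∈ univ.erase i, (u p)^2 = 0 := by linarith
        have := (Finset.sum_eq_zero_iff_of_nonneg fun p _ => sq_nonneg (u p)).1 h0 l
          (Finset.mem_erase.2 ⟨hl, mem_univ l⟩)
        exact pow_eq_zero_iff (n := 2) (by norm_num) |>.1 this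
      have hsingle : ∀ x', ∑ l, u l * vv l x' = vv i x' := by
        intro x'
        rw [Finset.sum_eq_single i]
        · rw [hui1, one_mul]
        · intro l _ hl
          rw [hul l hl, zero_mul]
        · intro habs
          exact absurd (mem_univ i) habs
      have hzero : ∀ x' ∈ B, (vv i x')^2 * m x' = 0 := by
        have hnn : ∀ x' ∈ B, 0 ≤ (∑ l, u l * vv l x')^2 * m x' :=
          fun x' _ => mul_nonneg (sq_nonneg _) (hm x').le
        intro x' hx'
        have := (Finset.sum_eq_zero_iff_of_nonneg hnn).1 hsums.2 x' hx'
        rw [hsingle x'] at this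
        exact this
      have h2 : (vv i x)^2 = 0 := by
        rcases mul_eq_zero.1 (hzero x hx) with h' | h'
        · exact h'
        · exact absurd h' (hm x).ne'
      exact pow_eq_zero_iff (n := 2) (by norm_num) |>.1 h2
  have htermle : ∀ i ∈ (univ : Finset (Fin (Fintype.card {x : V // x ∉ B}))),
      ν i * Gm⁻¹ i i ≤ ν i := by
    intro i _
    nlinarith [hνnn i, (hcol i).1]
  have hsumeq : ∑ i, ν i * Gm⁻¹ i i = ∑ i, ν i :=
    le_antisymm (Finset.sum_le_sum htermle) hchain
  have htermeq : ∀ i, ν i * Gm⁻¹ i i = ν i := by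
    intro i
    exact (Finset.sum_eq_sum_iff_of_le htermle).1 hsumeq i (mem_univ i)
  have hB0 : ∀ i, ν i ≠ 0 → ∀ x ∈ B, vv i x = 0 := by
    intro i hνi x hx
    have hg1 : Gm⁻¹ i i = 1 :=
      mul_left_cancel₀ hνi ((htermeq i).trans (mul_one (ν i)).symm)
    exact (hcol i).2 hg1 x hx
  -- μ is nonnegative and attains 0
  have hμform : ∀ i, ∑ x, (-(glap m w (ψ i) x)) * ψ i x * m x = μ i := by
    intro i
    have e : ∀ x, (-(glap m w (ψ i) x)) * ψ i x * m x = μ i * (ψ i x * ψ i x * m x) := by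
      intro x
      rw [congrFun (hψe' i) x]
      ring
    simp_rw [e]
    rw [← Finset.mul_sum, hψo i i]
    simp
  have hμnn : ∀ i, 0 ≤ μ i := by
    intro i
    rw [← hμform i, form_eq_energy m hmne w hwsymm]
    have := energy_nonneg w hwnn (ψ i)
    linarith
  have compV := completeness rfl m hmne ψ hψo
  have hVne : Nonempty V := ⟨hB.choose⟩
  obtain ⟨x0⟩ := hVne
  have hexists0 : ∃ j, μ j = 0 := by
    set c : Fin (Fintype.card V) → ℝ := fun i => ∑ x, ψ i x * m x with hc
    have hone : ∀ x, ∑ i, c i * ψ i x = 1 := by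
      intro x
      have e : ∀ i, c i * ψ i x = ∑ y, (ψ i y * m y) * ψ i x := by
        intro i
        rw [hc, Finset.sum_mul]
      simp_rw [e]
      rw [Finset.sum_comm]
      have e2 : ∀ y, ∑ i, (ψ i y * m y) * ψ i x = (∑ i, ψ i y * ψ i x) * m y := by
        intro y
        rw [Finset.sum_mul]
        refine Finset.sum_congr rfl fun i _ => ?_
        ring
      simp_rw [e2, compV]
      rw [Finset.sum_ite_eq' univ x (fun _ => (1:ℝ))]
      simp
    have hglap1 : glap m w (fun _ => (1:ℝ)) = fun _ => 0 := by
      funext x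
      unfold glap
      simp
    have hlin := glap_lin m w c ψ
    have hfun : (fun x => ∑ i, c i * ψ i x) = fun _ => (1:ℝ) := funext hone
    rw [hfun, hglap1] at hlin
    have hzero : ∀ x, ∑ i, c i * glap m w (ψ i) x = 0 := fun x => (congrFun hlin x).symm
    have hcj : ∀ j, c j * μ j = 0 := by
      intro j
      have h1 : ∑ x, (∑ i, c i * glap m w (ψ i) x) * ψ j x * m x = 0 := by
        simp_rw [hzero]
        simp
      have h2 : ∀ x, (∑ i, c i * glap m w (ψ i) x) * ψ j x * m x
          = ∑ i, (c i * (-(μ i))) * (ψ i x * ψ j x * m x) := by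
        intro x
        rw [Finset.sum_mul, Finset.sum_mul]
        refine Finset.sum_congr rfl fun i _ => ?_
        rw [congrFun (hψe' i) x]
        ring
      rw [Finset.sum_congr rfl fun x _ => h2 x, Finset.sum_comm] at h1
      have h3 : ∀ i, ∑ x, (c i * (-(μ i))) * (ψ i x * ψ j x * m x)
          = if i = j then c i * (-(μ i)) else 0 := by
        intro i
        rw [← Finset.mul_sum, hψo i j]
        by_cases hij : i = j <;> simp [hij]
      rw [Finset.sum_congr rfl fun i _ => h3 i, Finset.sum_ite_eq' univ j
        (fun i => c i * (-(μ i)))] at h1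
      simp at h1
      rcases h1 with h1 | h1
      · rw [h1, zero_mul]
      · rw [h1, mul_zero]
    by_contra hno
    push_neg at hno
    have hc0 : ∀ j, c j = 0 := by
      intro j
      rcases mul_eq_zero.1 (hcj j) with h' | h'
      · exact h'
      · exact absurd h' (hno j)
    have := hone x0
    simp_rw [hc0] at this
    simp at this
  have hn0 : 0 < Fintype.card V := lt_of_lt_of_le hk1 hkn
  have hμ0 : μ ⟨0, hn0⟩ = 0 := by
    obtain ⟨j, hj⟩ := hexists0
    refine le_antisymm ?_ (hμnn _)
    calc μ ⟨0, hn0⟩ ≤ μ j := hμmono (by simp [Fin.le_def])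
      _ = 0 := hj
  set i0 : Fin (Fintype.card {x : V // x ∉ B}) := ⟨0, hk1⟩ with hi0
  have hν0 : ν i0 = 0 := (h i0).trans hμ0
  -- eigenfunctions with zero eigenvalue are constant
  have hconst : ∀ i, ν i = 0 → ∀ y y' : {x : V // x ∉ B}, φ i y = φ i y' := by
    intro i hνi y y'
    have hE : ∑ x, ∑ y, (vv i y - vv i x)^2 * w x y = 0 := by
      have h1 := hνform i
      rw [hνi, form_eq_energy m hmne w hwsymm] at h1
      linarith
    have := const_of_energy_zero G hconn w hwpos hwnn (vv i) hE y.1 y'.1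
    rw [hvΩ i y, hvΩ i y'] at this
    exact this
  obtain ⟨y0c⟩ := hΩne
  have hκ : φ i0 y0c ≠ 0 := by
    intro hκ0
    have h1 := hφo' i0 i0
    rw [if_pos rfl] at h1
    have h2 : ∀ y : {x : V // x ∉ B}, φ i0 y * φ i0 y * m y.1 = 0 := by
      intro y
      rw [hconst i0 hν0 y y0c, hκ0]
      ring
    rw [Finset.sum_congr rfl fun y _ => h2 y] at h1
    simp at h1
  -- orthogonality to constants
  have hM0 : ∀ i, ν i ≠ 0 → ∑ y : {x : V // x ∉ B}, φ i y * m y.1 = 0 := by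
    intro i hνi
    have hii0 : i ≠ i0 := fun hii => hνi (hii ▸ hν0)
    have h1 := hφo' i i0
    rw [if_neg hii0] at h1
    have h2 : ∀ y : {x : V // x ∉ B}, φ i y * φ i0 y * m y.1
        = (φ i y * m y.1) * φ i0 y0c := by
      intro y
      rw [hconst i0 hν0 y y0c]
      ring
    rw [Finset.sum_congr rfl fun y _ => h2 y, ← Finset.sum_mul] at h1
    rcases mul_eq_zero.1 h1 with h' | h'
    · exact h'
    · exact absurd h' hκ
  -- vanishing of boundary functionals
  have hL0 : ∀ i, ν i ≠ 0 → ∀ x ∈ B, ∑ y : {x : V // x ∉ B}, φ i y * w x y.1 = 0 := by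
    intro i hνi x hx
    rw [← hvBd i x hx, hB0 i hνi x hx, zero_mul]
  have compΩ := completeness rfl (fun y : {x : V // x ∉ B} => m y.1)
    (fun y => hmne y.1) φ hφo'
  -- the key identity on boundary weights
  have hfinal : ∀ x ∈ B, ∀ y : {x : V // x ∉ B},
      w x y.1 * (∑ z : {x : V // x ∉ B}, m z.1)
        = m y.1 * (∑ z : {x : V // x ∉ B}, w x z.1) := by
    intro x hx y
    have hgen : ∀ F : {x : V // x ∉ B} → ℝ,
        ∑ i, (φ i y * m y.1) * (∑ z : {x : V // x ∉ B}, φ i z * F z) = F y := by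
      intro F
      have e : ∀ i, (φ i y * m y.1) * (∑ z : {x : V // x ∉ B}, φ i z * F z)
          = ∑ z : {x : V // x ∉ B}, (φ i y * φ i z * m y.1) * F z := by
        intro i
        rw [Finset.mul_sum]
        refine Finset.sum_congr rfl fun z _ => ?_
        ring
      simp_rw [e]
      rw [Finset.sum_comm]
      have e2 : ∀ z, ∑ i, (φ i y * φ i z * m y.1) * F z
          = ((∑ i, φ i y * φ i z) * m y.1) * F z := by
        intro z
        rw [Finset.sum_mul, Finset.sum_mul]
      have e3 : ∀ z, ((∑ i, φ i y * φ i z) * m y.1) * F z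
          = (if y = z then 1 else 0) * F z := by
        intro z
        rw [compΩ y z]
      simp_rw [e2, e3, ite_mul, one_mul, zero_mul]
      rw [Finset.sum_ite_eq univ y F]
      simp
    have hLM : ∀ i, (∑ z : {x : V // x ∉ B}, φ i z * w x z.1)
          * (∑ z : {x : V // x ∉ B}, m z.1)
        = (∑ z : {x : V // x ∉ B}, φ i z * m z.1)
          * (∑ z : {x : V // x ∉ B}, w x z.1) := by
      intro i
      by_cases hνi : ν i = 0
      · have hc : ∀ z : {x : V // x ∉ B}, φ i z = φ i y0c := fun z => hconst i hνi z y0c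
        simp_rw [hc]
        rw [← Finset.mul_sum, ← Finset.mul_sum]
        ring
      · rw [hL0 i hνi x hx, hM0 i hνi, zero_mul, zero_mul]
    calc w x y.1 * (∑ z : {x : V // x ∉ B}, m z.1)
        = (∑ i, (φ i y * m y.1) * (∑ z : {x : V // x ∉ B}, φ i z * w x z.1))
            * (∑ z : {x : V // x ∉ B}, m z.1) := by rw [hgen (fun z => w x z.1)]
      _ = ∑ i, (φ i y * m y.1) * ((∑ z : {x : V // x ∉ B}, φ i z * w x z.1)
            * (∑ z : {x : V // x ∉ B}, m z.1)) := by
          rw [Finset.sum_mul]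
          exact Finset.sum_congr rfl fun i _ => by ring
      _ = ∑ i, (φ i y * m y.1) * ((∑ z : {x : V // x ∉ B}, φ i z * m z.1)
            * (∑ z : {x : V // x ∉ B}, w x z.1)) :=
          Finset.sum_congr rfl fun i _ => by rw [hLM i]
      _ = (∑ i, (φ i y * m y.1) * (∑ z : {x : V // x ∉ B}, φ i z * m z.1))
            * (∑ z : {x : V // x ∉ B}, w x z.1) := by
          rw [Finset.sum_mul]
          exact Finset.sum_congr rfl fun i _ => by ring
      _ = m y.1 * (∑ z : {x : V // x ∉ B}, w x z.1) := by rw [hgen (fun z => m z.1)]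
  -- conclusion
  have hSm : 0 < ∑ z : {x : V // x ∉ B}, m z.1 := by
    haveI := Fintype.card_pos_iff.1 hk1
    exact Finset.sum_pos (fun z _ => hm z.1) Finset.univ_nonempty
  refine ⟨fun x => (∑ z : {x : V // x ∉ B}, w x z.1) / ((∑ z : {x : V // x ∉ B}, m z.1) * m x),
    ?_, ?_, ?_⟩
  · intro x hx
    exact div_pos (hd x hx) (mul_pos hSm (hm x))
  · intro x hx y hy
    have hfin := hfinal x hx ⟨y, hy⟩
    rw [divhelp _ _ _ _ (hmne x) hSm.ne', eq_div_iff hSm.ne']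
    exact hfin
  · intro x hx y hy
    have hfin := hfinal x hx ⟨y, hy⟩
    have hwpos' : 0 < w x y := by
      have hwe : w x y = m y * (∑ z : {x : V // x ∉ B}, w x z.1)
          / (∑ z : {x : V // x ∉ B}, m z.1) := by
        rw [eq_div_iff hSm.ne']
        exact hfin
      rw [hwe]
      exact div_pos (mul_pos (hm y) (hd x hx)) hSm
    by_contra hadj
    rw [hw0 x y hadj] at hwpos'
    exact lt_irrefl 0 hwpos'

end
end

section
/- Let (G,m,w,B) be a connected weighted finite graph with boundary. The equalities μ_i(Ω) + min_{x∈Ω} Deg_b(x) = λ_i = μ_i(Ω) + max_{x∈Ω} Deg_b(x) hold for every i = 1, 2, …, |Ω| if and only if Deg_b(x) is independent of x ∈ Ω (i.e., Deg_b is constant on Ω). -/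
open Finset

noncomputable section

/-! On the interior, `Δ^D = Δ_Ω - Deg_b`. If `Deg_b ≡ c`, an orthonormal eigenbasis of `Δ^D` is
one of `Δ_Ω` with every eigenvalue shifted by `c`; as an eigenbasis makes the characteristic
polynomial split with exactly these eigenvalues as roots, the nondecreasing lists satisfy
`λ_i = μ_i(Ω) + c`. Conversely, the two equalities at a single index force
`min Deg_b = max Deg_b`. -/

theorem linearIndependent_of_weighted_orthonormal {ι W : Type*} [Fintype ι] [DecidableEq ι]
    [Fintype W] {m : W → ℝ} {φ : ι → W → ℝ}
    (h : ∀ i j, ∑ x, φ i x * φ j x * m x = if i = j then 1 else 0) :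
    LinearIndependent ℝ φ := by
  refine Fintype.linearIndependent_iff.mpr fun g hg j => ?_
  calc g j = ∑ i, g i * ∑ x, φ i x * φ j x * m x := by simp [h]
    _ = ∑ x, (∑ i, g i • φ i) x * φ j x * m x := by
        simp only [mul_sum, Finset.sum_apply, Pi.smul_apply, smul_eq_mul, sum_mul]
        rw [sum_comm]
        simp only [mul_assoc]
    _ = 0 := by rw [hg]; simp

namespace IsEigenBasis

variable {W : Type*} [Fintype W] {m : W → ℝ}

open Polynomial in
theorem charpoly_eq_prod {L : (W → ℝ) →ₗ[ℝ] W → ℝ} {e : Fin (Fintype.card W) → ℝ}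
    (h : IsEigenBasis m L e) : L.charpoly = ∏ i, (X - C (e i)) := by
  obtain ⟨φ, horth, heig⟩ := h
  let b := basisOfLinearIndependentOfCardEqFinrank' φ
    (linearIndependent_of_weighted_orthonormal horth) (by simp)
  have hdiag : LinearMap.toMatrix b b L = Matrix.diagonal e := by
    ext i j
    rw [LinearMap.toMatrix_apply, Matrix.diagonal_apply]
    have : L (b j) = e j • b j := by
      simp only [b, coe_basisOfLinearIndependentOfCardEqFinrank', heig j]; rfl
    rw [this, map_smul, b.repr_self]
    split_ifs with hij <;> simp [hij]
  rw [← LinearMap.charpoly_toMatrix L b, hdiag, Matrix.charpoly_diagonal]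

theorem roots_charpoly {L : (W → ℝ) →ₗ[ℝ] W → ℝ} {e : Fin (Fintype.card W) → ℝ}
    (h : IsEigenBasis m L e) : L.charpoly.roots = univ.val.map e := by
  rw [h.charpoly_eq_prod, ← Polynomial.roots_multiset_prod_X_sub_C (univ.val.map e),
    Multiset.map_map]
  rfl

theorem univ_map_eq {L : (W → ℝ) →ₗ[ℝ] W → ℝ} {e f : Fin (Fintype.card W) → ℝ}
    (he : IsEigenBasis m L e) (hf : IsEigenBasis m L f) :
    univ.val.map e = univ.val.map f := by
  rw [← he.roots_charpoly, hf.roots_charpoly]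

theorem of_sub_smul {n : ℕ} {L : (W → ℝ) → W → ℝ} {e : Fin n → ℝ} (c : ℝ)
    (h : IsEigenBasis m (fun u => L u - c • u) e) : IsEigenBasis m L (fun i => e i + c) := by
  obtain ⟨φ, horth, heig⟩ := h
  refine ⟨φ, horth, fun i => funext fun x => ?_⟩
  have := congrFun (heig i) x
  simp only [Pi.sub_apply, Pi.smul_apply, smul_eq_mul] at this
  linarith

end IsEigenBasis

theorem Monotone.eq_of_univ_map_eq {α : Type*} [LinearOrder α] {n : ℕ} {f g : Fin n → α}
    (hf : Monotone f) (hg : Monotone g) (h : univ.val.map f = univ.val.map g) :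
    f = g := by
  refine List.ofFn_injective (List.Perm.eq_of_sortedLE hf.sortedLE_ofFn hg.sortedLE_ofFn ?_)
  rwa [← Multiset.coe_eq_coe, ← Fin.univ_val_map, ← Fin.univ_val_map]

theorem eq_of_ciInf_eq_ciSup {α ι : Type*} [ConditionallyCompleteLattice α] [Finite ι]
    {f : ι → α} (h : iInf f = iSup f) (x y : ι) : f x = f y := by
  have hle : ∀ a b, f a ≤ f b := fun a b =>
    calc f a ≤ iSup f := le_ciSup (Set.finite_range f).bddAbove a
      _ = iInf f := h.symm
      _ ≤ f b := ciInf_le (Set.finite_range f).bddBelow b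
  exact (hle x y).antisymm (hle y x)

section InteriorLaplacian

variable {V : Type*} [Fintype V] [DecidableEq V] (m : V → ℝ) (w : V → V → ℝ) (B : Finset V)

def olapLinearMap : ({x : V // x ∉ B} → ℝ) →ₗ[ℝ] {x : V // x ∉ B} → ℝ where
  toFun := olap m w B
  map_add' u v := by
    ext x
    simp only [olap, Pi.add_apply, ← mul_add, ← sum_add_distrib]
    congr 1
    exact sum_congr rfl fun y _ => by ring
  map_smul' c u := by
    ext x
    simp only [olap, Pi.smul_apply, smul_eq_mul, RingHom.id_apply, mul_sum]
    exact sum_congr rfl fun y _ => by ring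

theorem dlap_eq_olap_sub (u : {x : V // x ∉ B} → ℝ) (x : {x : V // x ∉ B}) :
    dlap m w B u x = olap m w B u x - degb m w B x.1 * u x := by
  have hx : E0 B u x.1 = u x := dif_neg x.2
  have hB : ∑ y ∈ B, (E0 B u y - E0 B u x.1) * w x.1 y = -(u x * ∑ y ∈ B, w x.1 y) := by
    rw [mul_sum, ← sum_neg_distrib]
    exact sum_congr rfl fun y hy => by rw [hx, E0, dif_pos hy]; ring
  have hBc : ∑ y ∈ Bᶜ, (E0 B u y - E0 B u x.1) * w x.1 y
      = ∑ y : {x : V // x ∉ B}, (u y - u x) * w x.1 y.1 := by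
    rw [sum_subtype Bᶜ (fun y => mem_compl)]
    exact sum_congr rfl fun y _ => by rw [hx, E0, dif_neg y.2]
  rw [dlap, glap, olap, degb, ← sum_add_sum_compl B, hB, hBc]
  ring

end InteriorLaplacian

theorem stmt_6_general {V : Type*} [Fintype V] [DecidableEq V]
    (m : V → ℝ)
    (w : V → V → ℝ)
    (B : Finset V)
    (lam : Fin (Fintype.card {x : V // x ∉ B}) → ℝ) (hlammono : Monotone lam)
    (hlam : IsEigenBasis (fun x : {x : V // x ∉ B} => m x.1) (dlap m w B) (fun i => -(lam i)))
    (μΩ : Fin (Fintype.card {x : V // x ∉ B}) → ℝ) (hμΩmono : Monotone μΩ)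
    (hμΩ : IsEigenBasis (fun x : {x : V // x ∉ B} => m x.1) (olap m w B) (fun i => -(μΩ i)))
    :
    (∀ i : Fin (Fintype.card {x : V // x ∉ B}),
        μΩ i + (⨅ x : {x : V // x ∉ B}, degb m w B x.1) = lam i ∧ lam i = μΩ i + (⨆ x : {x : V // x ∉ B}, degb m w B x.1)) ↔
      (∀ x y : {x : V // x ∉ B}, degb m w B x.1 = degb m w B y.1) := by
  constructor
  · intro h x y
    have : Nonempty {x : V // x ∉ B} := ⟨x⟩
    obtain ⟨hinf, hsup⟩ := h ⟨0, Fintype.card_pos⟩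
    exact eq_of_ciInf_eq_ciSup (f := fun x : {x : V // x ∉ B} => degb m w B x.1)
      (by linarith) x y
  · intro h i
    have : Nonempty {x : V // x ∉ B} := Fintype.card_pos_iff.mp i.pos
    obtain ⟨x₀⟩ := id this
    set c := degb m w B x₀.1
    have hdeg : (fun x : {x : V // x ∉ B} => degb m w B x.1) = fun _ => c :=
      funext fun x => h x x₀
    have hshift : dlap m w B = fun u => olapLinearMap m w B u - c • u := by
      funext u x
      rw [dlap_eq_olap_sub, h x x₀]
      rfl
    have hlam' : IsEigenBasis _ (olapLinearMap m w B) (fun i => -lam i + c) :=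
      (hshift ▸ hlam).of_sub_smul c
    have hspec : lam = fun i => μΩ i + c := by
      refine hlammono.eq_of_univ_map_eq (hμΩmono.add_const c) ?_
      simpa [Multiset.map_map, Function.comp_def, add_comm] using
        congrArg (Multiset.map (c - ·)) (hlam'.univ_map_eq hμΩ)
    rw [hdeg, ciInf_const, ciSup_const, hspec]
    exact ⟨rfl, rfl⟩

theorem stmt_6 {V : Type*} [Fintype V] [DecidableEq V]
    (G : SimpleGraph V) (hconn : G.Connected)
    (m : V → ℝ) (hm : ∀ x, 0 < m x)
    (w : V → V → ℝ) (hwsymm : ∀ x y, w x y = w y x)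
    (hwpos : ∀ x y, G.Adj x y → 0 < w x y)
    (hw0 : ∀ x y, ¬ G.Adj x y → w x y = 0)
    (B : Finset V) (hB : B.Nonempty)
    (hBB : ∀ x ∈ B, ∀ y ∈ B, ¬ G.Adj x y)
    (hBint : ∀ x ∈ B, ∃ y, y ∉ B ∧ G.Adj x y)
    (lam : Fin (Fintype.card {x : V // x ∉ B}) → ℝ) (hlammono : Monotone lam)
    (hlam : IsEigenBasis (fun x : {x : V // x ∉ B} => m x.1) (dlap m w B) (fun i => -(lam i)))
    (μΩ : Fin (Fintype.card {x : V // x ∉ B}) → ℝ) (hμΩmono : Monotone μΩ)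
    (hμΩ : IsEigenBasis (fun x : {x : V // x ∉ B} => m x.1) (olap m w B) (fun i => -(μΩ i)))
    :
    (∀ i : Fin (Fintype.card {x : V // x ∉ B}),
        μΩ i + (⨅ x : {x : V // x ∉ B}, degb m w B x.1) = lam i ∧ lam i = μΩ i + (⨆ x : {x : V // x ∉ B}, degb m w B x.1)) ↔
      (∀ x y : {x : V // x ∉ B}, degb m w B x.1 = degb m w B y.1) :=
  stmt_6_general m w B lam hlammono hlam μΩ hμΩmono hμΩ
end
end

section
/- Let (G,m,w,B) be a connected weighted finite graph with boundary. Then ν_i = μ_i(Ω) holds for every i = 1, 2, …, |Ω| if and only if each boundary vertex is adjacent to exactly one interior vertex. -/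
open Finset

noncomputable section

/-! ### Auxiliary material for the proof -/

open Polynomial Matrix in
theorem aux_conj_charpoly {n : ℕ} (P D : Matrix (Fin n) (Fin n) ℝ)
    (h1 : Pᵀ * P = 1) :
    (Pᵀ * D * P).charpoly = D.charpoly := by
  have hQ : (Pᵀ.map (C : ℝ →+* ℝ[X])) * (P.map C) = 1 := by
    rw [← Matrix.map_mul, h1, Matrix.map_one _ (map_zero _) (map_one _)]
  have hch : charmatrix (Pᵀ * D * P) = (Pᵀ.map (C : ℝ →+* ℝ[X])) * charmatrix D * (P.map C) := by
    unfold charmatrix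
    rw [Matrix.mul_sub, Matrix.sub_mul]
    congr 1
    · rw [Matrix.scalar_apply, ← Matrix.smul_one_eq_diagonal, Matrix.mul_smul, Matrix.smul_mul,
        mul_one, hQ]
    · simp only [RingHom.mapMatrix_apply]
      rw [Matrix.map_mul, Matrix.map_mul]
  have hdet : (Pᵀ.map (C : ℝ →+* ℝ[X])).det * (P.map C).det = 1 := by
    rw [← Matrix.det_mul, hQ, Matrix.det_one]
  unfold Matrix.charpoly
  rw [hch, Matrix.det_mul, Matrix.det_mul]
  calc (Pᵀ.map (C : ℝ →+* ℝ[X])).det * (charmatrix D).det * (P.map C).det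
      = (Pᵀ.map (C : ℝ →+* ℝ[X])).det * (P.map C).det * (charmatrix D).det := by ring
    _ = (charmatrix D).det := by rw [hdet, one_mul]

open Polynomial Matrix in
theorem aux_charpoly_diagonal {n : ℕ} (d : Fin n → ℝ) :
    (Matrix.diagonal d).charpoly = ∏ i, (X - C (d i)) := by
  rw [Matrix.charpoly_of_upperTriangular (Matrix.diagonal d)
    (fun i j h => Matrix.diagonal_apply_ne d (ne_of_gt h))]
  simp

open Matrix in
/-- The symmetrized matrix of an operator, transported to `Fin (card W)`. -/
def Smat {W : Type*} [Fintype W] (m : W → ℝ) (A : W → W → ℝ) :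
    Matrix (Fin (Fintype.card W)) (Fin (Fintype.card W)) ℝ :=
  Matrix.of fun i j => Real.sqrt (m ((Fintype.equivFin W).symm i)) *
    A ((Fintype.equivFin W).symm i) ((Fintype.equivFin W).symm j) /
    Real.sqrt (m ((Fintype.equivFin W).symm j))

open Matrix in
theorem aux_decomp {W : Type*} [Fintype W] [DecidableEq W] (m : W → ℝ) (hm : ∀ x, 0 < m x)
    (A : W → W → ℝ) (L : (W → ℝ) → (W → ℝ))
    (hL : ∀ u x, L u x = ∑ y, A x y * u y)
    (e : Fin (Fintype.card W) → ℝ) (hE : IsEigenBasis m L e) :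
    ∃ P : Matrix (Fin (Fintype.card W)) (Fin (Fintype.card W)) ℝ,
      Pᵀ * P = 1 ∧ P * Pᵀ = 1 ∧ Smat m A = Pᵀ * Matrix.diagonal e * P := by
  obtain ⟨φ, horth, heig⟩ := hE
  set κ := (Fintype.equivFin W).symm with hκ
  have hs : ∀ x : W, Real.sqrt (m x) ≠ 0 := fun x =>
    ne_of_gt (Real.sqrt_pos.mpr (hm x))
  set P : Matrix (Fin (Fintype.card W)) (Fin (Fintype.card W)) ℝ :=
    Matrix.of (fun i j => φ i (κ j) * Real.sqrt (m (κ j))) with hP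
  have h2 : P * Pᵀ = 1 := by
    ext i j
    rw [Matrix.mul_apply, Matrix.one_apply, ← horth i j]
    rw [← Equiv.sum_comp κ (fun x => φ i x * φ j x * m x)]
    apply Finset.sum_congr rfl
    intro k _
    simp only [hP, Matrix.transpose_apply, Matrix.of_apply]
    have hmm : Real.sqrt (m (κ k)) * Real.sqrt (m (κ k)) = m (κ k) :=
      Real.mul_self_sqrt (hm (κ k)).le
    linear_combination φ i (κ k) * φ j (κ k) * hmm
  have h1 : Pᵀ * P = 1 := mul_eq_one_comm.mp h2
  refine ⟨P, h1, h2, ?_⟩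
  have hSP : Smat m A * Pᵀ = Pᵀ * Matrix.diagonal e := by
    ext i j
    rw [Matrix.mul_apply, Matrix.mul_diagonal]
    have : ∀ k, Smat m A i k * Pᵀ k j
        = Real.sqrt (m (κ i)) * (A (κ i) (κ k) * φ j (κ k)) := by
      intro k
      simp only [Smat, hP, Matrix.transpose_apply, Matrix.of_apply]
      field_simp
      rw [div_eq_iff (hs (κ k))]
      ring
    rw [Finset.sum_congr rfl (fun k _ => this k), ← Finset.mul_sum]
    rw [Equiv.sum_comp κ (fun y => A (κ i) y * φ j y), ← hL (φ j) (κ i)]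
    have := congrFun (heig j) (κ i)
    rw [this]
    simp only [hP, Matrix.transpose_apply, Matrix.of_apply]
    ring
  calc Smat m A = Smat m A * (Pᵀ * P) := by rw [h1, mul_one]
    _ = (Smat m A * Pᵀ) * P := by rw [mul_assoc]
    _ = Pᵀ * Matrix.diagonal e * P := by rw [hSP]

open Matrix in
theorem aux_trace {W : Type*} [Fintype W] [DecidableEq W] (m : W → ℝ) (hm : ∀ x, 0 < m x)
    (A : W → W → ℝ) (L : (W → ℝ) → (W → ℝ))
    (hL : ∀ u x, L u x = ∑ y, A x y * u y)
    (e : Fin (Fintype.card W) → ℝ) (hE : IsEigenBasis m L e) :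
    ∑ i, e i = ∑ x, A x x := by
  obtain ⟨P, h1, h2, hS⟩ := aux_decomp m hm A L hL e hE
  have ht : (Smat m A).trace = ∑ i, e i := by
    rw [hS, Matrix.trace_mul_comm, ← mul_assoc, h2, one_mul, Matrix.trace_diagonal]
  rw [← ht, Matrix.trace]
  rw [← Equiv.sum_comp (Fintype.equivFin W).symm (fun x => A x x)]
  apply Finset.sum_congr rfl
  intro i _
  simp only [Matrix.diag_apply, Smat, Matrix.of_apply]
  rw [mul_comm, mul_div_assoc, div_self (ne_of_gt (Real.sqrt_pos.mpr (hm _))), mul_one]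

open Polynomial Matrix in
theorem aux_charpoly {W : Type*} [Fintype W] [DecidableEq W] (m : W → ℝ) (hm : ∀ x, 0 < m x)
    (A : W → W → ℝ) (L : (W → ℝ) → (W → ℝ))
    (hL : ∀ u x, L u x = ∑ y, A x y * u y)
    (e : Fin (Fintype.card W) → ℝ) (hE : IsEigenBasis m L e) :
    (Smat m A).charpoly = ∏ i, (X - C (e i)) := by
  obtain ⟨P, h1, _, hS⟩ := aux_decomp m hm A L hL e hE
  rw [hS, aux_conj_charpoly P _ h1, aux_charpoly_diagonal]

open Polynomial in
theorem aux_mono_eq {n : ℕ} (ν μ : Fin n → ℝ) (hν : Monotone ν) (hμ : Monotone μ)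
    (h : ∏ i, (X - C (-(ν i))) = ∏ i, (X - C (-(μ i)))) : ∀ i, ν i = μ i := by
  have key : ∀ f : Fin n → ℝ, (∏ i, (X - C (-(f i)))).roots
      = (Finset.univ.val.map fun i => -(f i)) := by
    intro f
    rw [Finset.prod_eq_multiset_prod,
      show (Multiset.map (fun i => X - C (-f i)) univ.val)
        = ((Finset.univ.val.map fun i => -(f i)).map fun a => X - C a) by
          rw [Multiset.map_map]; rfl]
    exact roots_multiset_prod_X_sub_C _
  have h2 : (Finset.univ.val.map fun i => -(ν i)) = (Finset.univ.val.map fun i => -(μ i)) := by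
    rw [← key ν, ← key μ, h]
  have h3 : (Finset.univ.val.map ν) = (Finset.univ.val.map μ) := by
    have := congrArg (Multiset.map (fun x : ℝ => -x)) h2
    rwa [Multiset.map_map, Multiset.map_map, show ((fun x : ℝ => -x) ∘ fun i => -(ν i)) = ν by
      funext i; simp, show ((fun x : ℝ => -x) ∘ fun i => -(μ i)) = μ by funext i; simp] at this
  rw [Fin.univ_val_map, Fin.univ_val_map, Multiset.coe_eq_coe] at h3
  exact fun i => congrFun (List.ofFn_injective
    (List.Perm.eq_of_sortedLE hν.sortedLE_ofFn hμ.sortedLE_ofFn h3)) i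

/-- Matrix of `olap`. -/
def AOm {V : Type*} [Fintype V] [DecidableEq V] (m : V → ℝ) (w : V → V → ℝ) (B : Finset V)
    (z t : {x : V // x ∉ B}) : ℝ :=
  (1 / m z.1) * (w z.1 t.1 - if t = z then (∑ y : {x : V // x ∉ B}, w z.1 y.1) else 0)

/-- Matrix of `nlap`. -/
def ANm {V : Type*} [Fintype V] [DecidableEq V] (m : V → ℝ) (w : V → V → ℝ) (B : Finset V)
    (z t : {x : V // x ∉ B}) : ℝ :=
  (1 / m z.1) * (w z.1 t.1 +
    (∑ x ∈ B, w z.1 x * w x t.1 / (∑ y : {x : V // x ∉ B}, w x y.1)) -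
    if t = z then (∑ y : V, w z.1 y) else 0)

theorem olap_matrix {V : Type*} [Fintype V] [DecidableEq V] (m : V → ℝ) (w : V → V → ℝ)
    (B : Finset V) (u : {x : V // x ∉ B} → ℝ) (z : {x : V // x ∉ B}) :
    olap m w B u z = ∑ t, AOm m w B z t * u t := by
  unfold olap AOm
  have hL : ∑ y : {x : V // x ∉ B}, (u y - u z) * w z.1 y.1
      = (∑ y : {x : V // x ∉ B}, w z.1 y.1 * u y)
        - (∑ y : {x : V // x ∉ B}, w z.1 y.1) * u z := by
    rw [Finset.sum_mul, ← Finset.sum_sub_distrib]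
    apply Finset.sum_congr rfl; intro t _; ring
  have hR : ∑ t : {x : V // x ∉ B}, (1 / m z.1) *
        (w z.1 t.1 - if t = z then (∑ y : {x : V // x ∉ B}, w z.1 y.1) else 0) * u t
      = (1 / m z.1) * ((∑ t : {x : V // x ∉ B}, w z.1 t.1 * u t)
          - (∑ y : {x : V // x ∉ B}, w z.1 y.1) * u z) := by
    have : ∀ t : {x : V // x ∉ B}, (1 / m z.1) *
        (w z.1 t.1 - if t = z then (∑ y : {x : V // x ∉ B}, w z.1 y.1) else 0) * u t
        = (1 / m z.1) * (w z.1 t.1 * u t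
          - if t = z then (∑ y : {x : V // x ∉ B}, w z.1 y.1) * u t else 0) := by
      intro t; split_ifs <;> ring
    rw [Finset.sum_congr rfl (fun t _ => this t), ← Finset.mul_sum, Finset.sum_sub_distrib,
      Finset.sum_ite_eq' Finset.univ z
        (fun t => (∑ y : {x : V // x ∉ B}, w z.1 y.1) * u t),
      if_pos (Finset.mem_univ z)]
  rw [hL, hR]

theorem nlap_matrix {V : Type*} [Fintype V] [DecidableEq V] (m : V → ℝ) (w : V → V → ℝ)
    (B : Finset V) (u : {x : V // x ∉ B} → ℝ) (z : {x : V // x ∉ B}) :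
    nlap m w B u z = ∑ t, ANm m w B z t * u t := by
  have hsplit : ∀ g : V → ℝ, ∑ y : V, g y
      = (∑ x ∈ B, g x) + ∑ t : {x : V // x ∉ B}, g t.1 := by
    intro g
    rw [← Finset.sum_add_sum_compl B g]
    congr 1
    exact (Finset.sum_subtype Bᶜ (fun x => by simp) g)
  have hz : N0 w B u z.1 = u z := by
    rw [N0, dif_neg z.2]
  unfold nlap glap
  rw [hz, hsplit (fun y => (N0 w B u y - u z) * w z.1 y)]
  have hB : ∑ x ∈ B, (N0 w B u x - u z) * w z.1 x
      = (∑ x ∈ B, w z.1 x * ((∑ t : {x : V // x ∉ B}, u t * w x t.1)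
          / (∑ t : {x : V // x ∉ B}, w x t.1)))
        - u z * (∑ x ∈ B, w z.1 x) := by
    rw [Finset.mul_sum, ← Finset.sum_sub_distrib]
    apply Finset.sum_congr rfl
    intro x hx
    rw [N0, dif_pos hx]
    ring
  have hΩ : ∑ t : {x : V // x ∉ B}, (N0 w B u t.1 - u z) * w z.1 t.1
      = (∑ t : {x : V // x ∉ B}, w z.1 t.1 * u t)
        - u z * (∑ t : {x : V // x ∉ B}, w z.1 t.1) := by
    rw [Finset.mul_sum, ← Finset.sum_sub_distrib]
    apply Finset.sum_congr rfl
    intro t _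
    rw [N0, dif_neg t.2]
    ring
  have hR : ∑ t, ANm m w B z t * u t
      = (1 / m z.1) * (((∑ t : {x : V // x ∉ B}, w z.1 t.1 * u t)
          + (∑ x ∈ B, w z.1 x * ((∑ t : {x : V // x ∉ B}, u t * w x t.1)
            / (∑ t : {x : V // x ∉ B}, w x t.1))))
        - u z * ((∑ x ∈ B, w z.1 x) + ∑ t : {x : V // x ∉ B}, w z.1 t.1)) := by
    unfold ANm
    have step1 : ∀ t : {x : V // x ∉ B}, (1 / m z.1) * (w z.1 t.1 +
        (∑ x ∈ B, w z.1 x * w x t.1 / (∑ y : {x : V // x ∉ B}, w x y.1)) -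
        if t = z then (∑ y : V, w z.1 y) else 0) * u t
        = (1 / m z.1) * ((w z.1 t.1 * u t
          + ∑ x ∈ B, (w z.1 x * ((u t * w x t.1) / (∑ y : {x : V // x ∉ B}, w x y.1))))
          - if t = z then (∑ y : V, w z.1 y) * u t else 0) := by
      intro t
      have hS' : (∑ x ∈ B, w z.1 x * w x t.1 / (∑ y : {x : V // x ∉ B}, w x y.1)) * u t
          = ∑ x ∈ B, w z.1 x * ((u t * w x t.1) / (∑ y : {x : V // x ∉ B}, w x y.1)) := by
        rw [Finset.sum_mul]
        apply Finset.sum_congr rfl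
        intro x _; ring
      split_ifs <;> linear_combination (1 / m z.1) * hS'
    rw [Finset.sum_congr rfl (fun t _ => step1 t), ← Finset.mul_sum]
    congr 1
    rw [Finset.sum_sub_distrib, Finset.sum_add_distrib]
    congr 1
    · congr 1
      rw [Finset.sum_comm]
      apply Finset.sum_congr rfl
      intro x _
      rw [← Finset.mul_sum, ← Finset.sum_div]
    · rw [Finset.sum_ite_eq' Finset.univ z (fun t => (∑ y : V, w z.1 y) * u t),
        if_pos (Finset.mem_univ z), hsplit (fun y => w z.1 y)]
      ring
  rw [hB, hΩ, hR]
  ring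

theorem aux_ineq {ι : Type*} [Fintype ι] [DecidableEq ι] (a mm : ι → ℝ) (ha : ∀ i, 0 ≤ a i)
    (hmm : ∀ i, 0 < mm i) (hW : 0 < ∑ i, a i) :
    (∑ i, (1 / mm i) * (a i * a i / (∑ j, a j) - a i)) ≤ 0 ∧
    ((∑ i, (1 / mm i) * (a i * a i / (∑ j, a j) - a i)) = 0 →
      ∀ i j, 0 < a i → 0 < a j → i = j) := by
  have h1 : ∑ i, (1 / mm i) * (a i * a i / (∑ j, a j) - a i)
      = (∑ i, a i * a i / mm i) / (∑ j, a j) - ∑ i, a i / mm i := by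
    rw [Finset.sum_div, ← Finset.sum_sub_distrib]
    apply Finset.sum_congr rfl
    intro i _
    ring
  have hS1term : ∀ i, a i / mm i ≤ ∑ k, a k / mm k := by
    intro i
    exact Finset.single_le_sum (f := fun k => a k / mm k)
      (fun k _ => div_nonneg (ha k) (hmm k).le) (Finset.mem_univ i)
  have h2 : (∑ i, a i * a i / mm i) ≤ (∑ j, a j) * ∑ i, a i / mm i := by
    rw [Finset.sum_mul]
    apply Finset.sum_le_sum
    intro i _
    calc a i * a i / mm i = a i * (a i / mm i) := by ring
      _ ≤ a i * ∑ k, a k / mm k := mul_le_mul_of_nonneg_left (hS1term i) (ha i)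
  constructor
  · rw [h1, sub_nonpos, div_le_iff₀ hW]
    calc (∑ i, a i * a i / mm i) ≤ (∑ j, a j) * ∑ i, a i / mm i := h2
      _ = (∑ i, a i / mm i) * (∑ j, a j) := by ring
  · intro h0 i j hi hj
    rw [h1] at h0
    have hS2 : (∑ i, a i * a i / mm i) = (∑ i, a i / mm i) * (∑ j, a j) := by
      rw [← div_eq_iff (ne_of_gt hW)]
      linarith
    have hzero : ∑ k, a k * ((∑ i, a i / mm i) - a k / mm k) = 0 := by
      have : ∑ k, a k * ((∑ i, a i / mm i) - a k / mm k)
          = (∑ j, a j) * (∑ i, a i / mm i) - ∑ k, a k * a k / mm k := by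
        rw [Finset.sum_mul, ← Finset.sum_sub_distrib]
        apply Finset.sum_congr rfl
        intro k _
        ring
      rw [this, hS2]
      ring
    have hterm : ∀ k ∈ Finset.univ, (0:ℝ) ≤ a k * ((∑ i, a i / mm i) - a k / mm k) :=
      fun k _ => mul_nonneg (ha k) (sub_nonneg.mpr (hS1term k))
    have hall := (Finset.sum_eq_zero_iff_of_nonneg hterm).mp hzero
    have hieq : (∑ i', a i' / mm i') = a i / mm i := by
      have := hall i (Finset.mem_univ i)
      rcases mul_eq_zero.mp this with hc | hc
      · exact absurd hc (ne_of_gt hi)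
      · linarith [sub_eq_zero.mp hc]
    have hjeq : (∑ i', a i' / mm i') = a j / mm j := by
      have := hall j (Finset.mem_univ j)
      rcases mul_eq_zero.mp this with hc | hc
      · exact absurd hc (ne_of_gt hj)
      · linarith [sub_eq_zero.mp hc]
    by_contra hne
    have hpair : a i / mm i + a j / mm j ≤ ∑ i', a i' / mm i' := by
      have hss := Finset.sum_le_sum_of_subset_of_nonneg
        (Finset.subset_univ ({i, j} : Finset ι))
        (fun k _ _ => div_nonneg (ha k) (hmm k).le) (f := fun k => a k / mm k)
      rwa [Finset.sum_pair hne] at hss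
    have hjpos : 0 < a j / mm j := div_pos hj (hmm j)
    linarith [hieq ▸ hpair]

open Polynomial in
theorem stmt_9 {V : Type*} [Fintype V] [DecidableEq V]
    (G : SimpleGraph V) (hconn : G.Connected)
    (m : V → ℝ) (hm : ∀ x, 0 < m x)
    (w : V → V → ℝ) (hwsymm : ∀ x y, w x y = w y x)
    (hwpos : ∀ x y, G.Adj x y → 0 < w x y)
    (hw0 : ∀ x y, ¬ G.Adj x y → w x y = 0)
    (B : Finset V) (hB : B.Nonempty)
    (hBB : ∀ x ∈ B, ∀ y ∈ B, ¬ G.Adj x y)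
    (hBint : ∀ x ∈ B, ∃ y, y ∉ B ∧ G.Adj x y)
    (ν : Fin (Fintype.card {x : V // x ∉ B}) → ℝ) (hνmono : Monotone ν)
    (hν : IsEigenBasis (fun x : {x : V // x ∉ B} => m x.1) (nlap m w B) (fun i => -(ν i)))
    (μΩ : Fin (Fintype.card {x : V // x ∉ B}) → ℝ) (hμΩmono : Monotone μΩ)
    (hμΩ : IsEigenBasis (fun x : {x : V // x ∉ B} => m x.1) (olap m w B) (fun i => -(μΩ i)))
    :
    (∀ i : Fin (Fintype.card {x : V // x ∉ B}), ν i = μΩ i) ↔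
      (∀ x ∈ B, ∃! y : V, y ∉ B ∧ G.Adj x y) := by
  have hwnn : ∀ x y, 0 ≤ w x y := by
    intro x y
    by_cases hadj : G.Adj x y
    · exact (hwpos x y hadj).le
    · rw [hw0 x y hadj]
  have hmpos : ∀ x : {x : V // x ∉ B}, 0 < (fun x : {x : V // x ∉ B} => m x.1) x :=
    fun x => hm x.1
  have hWpos : ∀ x ∈ B, 0 < ∑ y : {x : V // x ∉ B}, w x y.1 := by
    intro x hx
    obtain ⟨y, hyB, hadj⟩ := hBint x hx
    exact Finset.sum_pos' (fun z _ => hwnn x z.1)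
      ⟨⟨y, hyB⟩, Finset.mem_univ _, hwpos x y hadj⟩
  have hsplit : ∀ g : V → ℝ, ∑ y : V, g y
      = (∑ x ∈ B, g x) + ∑ t : {x : V // x ∉ B}, g t.1 := by
    intro g
    rw [← Finset.sum_add_sum_compl B g]
    congr 1
    exact (Finset.sum_subtype Bᶜ (fun x => by simp) g)
  constructor
  · -- forward direction: equal spectra implies unique interior neighbour
    intro h x hx
    have t1 := aux_trace (fun x : {x : V // x ∉ B} => m x.1) hmpos (ANm m w B) (nlap m w B)
      (fun u z => nlap_matrix m w B u z) (fun i => -(ν i)) hν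
    have t2 := aux_trace (fun x : {x : V // x ∉ B} => m x.1) hmpos (AOm m w B) (olap m w B)
      (fun u z => olap_matrix m w B u z) (fun i => -(μΩ i)) hμΩ
    have htr : ∑ z : {x : V // x ∉ B}, ANm m w B z z
        = ∑ z : {x : V // x ∉ B}, AOm m w B z z := by
      rw [← t1, ← t2]
      apply Finset.sum_congr rfl
      intro i _
      simp only [h i]
    have hdiffz : ∀ z : {x : V // x ∉ B}, ANm m w B z z - AOm m w B z z
        = ∑ x' ∈ B, (1 / m z.1) *
          (w x' z.1 * w x' z.1 / (∑ y : {x : V // x ∉ B}, w x' y.1) - w x' z.1) := by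
      intro z
      unfold ANm AOm
      rw [if_pos rfl, if_pos rfl, hsplit (fun y => w z.1 y)]
      have : ∑ x' ∈ B, (1 / m z.1) *
          (w x' z.1 * w x' z.1 / (∑ y : {x : V // x ∉ B}, w x' y.1) - w x' z.1)
          = (1 / m z.1) * ((∑ x' ∈ B, w z.1 x' * w x' z.1
              / (∑ y : {x : V // x ∉ B}, w x' y.1)) - ∑ x' ∈ B, w z.1 x') := by
        rw [← Finset.mul_sum, Finset.sum_sub_distrib]
        congr 2
        · apply Finset.sum_congr rfl
          intro x' _
          rw [hwsymm z.1 x']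
        · apply Finset.sum_congr rfl
          intro x' _
          rw [hwsymm z.1 x']
      rw [this]
      ring
    have key0 : ∑ x' ∈ B, (∑ z : {x : V // x ∉ B}, (1 / m z.1) *
        (w x' z.1 * w x' z.1 / (∑ y : {x : V // x ∉ B}, w x' y.1) - w x' z.1)) = 0 := by
      calc ∑ x' ∈ B, (∑ z : {x : V // x ∉ B}, (1 / m z.1) *
          (w x' z.1 * w x' z.1 / (∑ y : {x : V // x ∉ B}, w x' y.1) - w x' z.1))
          = ∑ z : {x : V // x ∉ B}, ∑ x' ∈ B, (1 / m z.1) *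
            (w x' z.1 * w x' z.1 / (∑ y : {x : V // x ∉ B}, w x' y.1) - w x' z.1) :=
          Finset.sum_comm
        _ = ∑ z : {x : V // x ∉ B}, (ANm m w B z z - AOm m w B z z) :=
          Finset.sum_congr rfl (fun z _ => (hdiffz z).symm)
        _ = 0 := by rw [Finset.sum_sub_distrib, htr, sub_self]
    have hIneq := fun (x' : V) (hx' : x' ∈ B) =>
      aux_ineq (fun z : {x : V // x ∉ B} => w x' z.1)
        (fun z : {x : V // x ∉ B} => m z.1)
        (fun z => hwnn x' z.1) (fun z => hm z.1) (hWpos x' hx')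
    have hall0 := (Finset.sum_eq_zero_iff_of_nonpos
      (fun x' hx' => (hIneq x' hx').1)).mp key0
    obtain ⟨y, hyB, hyadj⟩ := hBint x hx
    refine ⟨y, ⟨hyB, hyadj⟩, ?_⟩
    rintro y' ⟨hy'B, hy'adj⟩
    have := (hIneq x hx).2 (hall0 x hx) ⟨y', hy'B⟩ ⟨y, hyB⟩
      (hwpos x y' hy'adj) (hwpos x y hyadj)
    exact congrArg Subtype.val this
  · -- backward direction: unique interior neighbour implies equal operators
    intro h i
    have hA : ANm m w B = AOm m w B := by
      funext z t
      unfold ANm AOm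
      have hsum : ∑ x ∈ B, w z.1 x * w x t.1 / (∑ y : {x : V // x ∉ B}, w x y.1)
          = if t = z then ∑ x ∈ B, w z.1 x else 0 := by
        have hite : (if t = z then ∑ x ∈ B, w z.1 x else 0)
            = ∑ x ∈ B, (if t = z then w z.1 x else 0) := by
          split_ifs
          · rfl
          · simp
        rw [hite]
        apply Finset.sum_congr rfl
        intro x hx
        obtain ⟨y₀, ⟨hy₀B, hy₀adj⟩, huniq⟩ := h x hx
        by_cases hz : w x z.1 = 0
        · have hzx : w z.1 x = 0 := by rw [hwsymm]; exact hz
          rw [hzx]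
          simp
        · have hadjz : G.Adj x z.1 := by
            by_contra hc
            exact hz (hw0 _ _ hc)
          have hzeq : z.1 = y₀ := huniq z.1 ⟨z.2, hadjz⟩
          by_cases ht : w x t.1 = 0
          · have htz : t ≠ z := by
              intro hc
              rw [hc] at ht
              exact hz ht
            rw [ht, if_neg htz]
            simp
          · have hadjt : G.Adj x t.1 := by
              by_contra hc
              exact ht (hw0 _ _ hc)
            have hteq : t.1 = y₀ := huniq t.1 ⟨t.2, hadjt⟩
            have htz : t = z := Subtype.ext (hteq.trans hzeq.symm)
            subst htz
            rw [if_pos rfl]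
            have hW : (∑ y : {x : V // x ∉ B}, w x y.1) = w x t.1 := by
              apply Finset.sum_eq_single t
              · intro y _ hyt
                by_contra hc
                have hadjy : G.Adj x y.1 := by
                  by_contra hc2
                  exact hc (hw0 _ _ hc2)
                have : y.1 = y₀ := huniq y.1 ⟨y.2, hadjy⟩
                exact hyt (Subtype.ext (this.trans hteq.symm))
              · intro hc
                exact absurd (Finset.mem_univ t) hc
            rw [hW, mul_div_assoc, div_self ht, mul_one]
      rw [hsum]
      split_ifs with htz
      · rw [hsplit (fun y => w z.1 y)]
        ring
      · ring
    have c1 := aux_charpoly (fun x : {x : V // x ∉ B} => m x.1) hmpos (ANm m w B) (nlap m w B)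
      (fun u z => nlap_matrix m w B u z) (fun i => -(ν i)) hν
    have c2 := aux_charpoly (fun x : {x : V // x ∉ B} => m x.1) hmpos (AOm m w B) (olap m w B)
      (fun u z => olap_matrix m w B u z) (fun i => -(μΩ i)) hμΩ
    have hprod : (∏ i, (X - C (-(ν i)))) = ∏ i, (X - C (-(μΩ i))) := by
      rw [← c1, ← c2, hA]
    exact aux_mono_eq ν μΩ hνmono hμΩmono hprod i
end
end

section
/- Let (G,m,w,B) be a connected weighted finite graph with boundary, and let T : ℝ^Ω → ℝ^Ω be the nonnegative self-adjoint operator (Tu)(z) = (1/m_z)∑_{x∈B} w_{xz}·(∑_{y∈Ω} u(y)w_{xy})/(∑_{y∈Ω} w_{xy}), with eigenvalues s₁² ≤ ⋯ ≤ s_{|Ω|}². The equalities ν_i + s₁² = λ_i = ν_i + s_{|Ω|}² hold for every i = 1, 2, …, |Ω| if and only if (i) every boundary vertex is adjacent to exactly one interior vertex, and (ii) the quantity ∑_{x∈B} w_{xz}²/(m_z ∑_{y∈Ω} w_{xy}) is independent of z ∈ Ω (in particular every interior vertex is adjacent to some boundary vertex). -/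
open Finset

noncomputable section

section ON

variable {W : Type*} [Fintype W] {n : ℕ}

lemma on_inner_sum (m : W → ℝ) (φ : Fin n → W → ℝ)
    (h : ∀ i j, (∑ x, φ i x * φ j x * m x) = if i = j then 1 else 0)
    (g : Fin n → ℝ) (j : Fin n) :
    ∑ x, (∑ i, g i * φ i x) * φ j x * m x = g j := by
  have h1 : ∀ x, (∑ i, g i * φ i x) * φ j x * m x = ∑ i, g i * (φ i x * φ j x * m x) := by
    intro x
    rw [Finset.sum_mul, Finset.sum_mul]
    exact Finset.sum_congr rfl fun i _ => by ring
  simp_rw [h1]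
  rw [Finset.sum_comm]
  simp_rw [← Finset.mul_sum, h]
  simp

lemma on_li (m : W → ℝ) (φ : Fin n → W → ℝ)
    (h : ∀ i j, (∑ x, φ i x * φ j x * m x) = if i = j then 1 else 0) :
    LinearIndependent ℝ φ := by
  rw [Fintype.linearIndependent_iff]
  intro g hg j
  have h2 : ∀ x, (∑ i, g i • φ i) x = ∑ i, g i * φ i x := by
    intro x; simp
  have h0 : ∑ x, (∑ i, g i * φ i x) * φ j x * m x = 0 := by
    simp_rw [← h2, hg]
    simp
  rw [on_inner_sum m φ h g j] at h0
  exact h0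

lemma on_expand (m : W → ℝ) (hn : n = Fintype.card W) (hpos : 0 < n) (φ : Fin n → W → ℝ)
    (h : ∀ i j, (∑ x, φ i x * φ j x * m x) = if i = j then 1 else 0) (u : W → ℝ) :
    u = ∑ i, (∑ x, u x * φ i x * m x) • φ i := by
  have : Nonempty (Fin n) := Fin.pos_iff_nonempty.mp hpos
  have hfr : Fintype.card (Fin n) = Module.finrank ℝ (W → ℝ) := by
    simp [Module.finrank_pi, hn]
  let b := basisOfLinearIndependentOfCardEqFinrank (on_li m φ h) hfr
  have hb : ⇑b = φ := coe_basisOfLinearIndependentOfCardEqFinrank _ _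
  have hrepr : u = ∑ i, b.repr u i • φ i := by
    conv_lhs => rw [← b.sum_repr u]
    rw [hb]
  have hco : ∀ j, (∑ x, u x * φ j x * m x) = b.repr u j := by
    intro j
    conv_lhs => rw [hrepr]
    have h2 : ∀ x, (∑ i, b.repr u i • φ i) x = ∑ i, b.repr u i * φ i x := by
      intro x; simp
    simp_rw [h2]
    exact on_inner_sum m φ h _ j
  conv_lhs => rw [hrepr]
  exact Finset.sum_congr rfl fun i _ => by rw [hco]

lemma eig_le (m : W → ℝ) (hn : n = Fintype.card W) (hpos : 0 < n)
    (L : (W → ℝ) →ₗ[ℝ] (W → ℝ))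
    (e f : Fin n → ℝ) (he : Antitone e) (hf : Antitone f)
    (φ ψ : Fin n → W → ℝ)
    (hφ : ∀ i j, (∑ x, φ i x * φ j x * m x) = if i = j then 1 else 0)
    (hψ : ∀ i j, (∑ x, ψ i x * ψ j x * m x) = if i = j then 1 else 0)
    (hφe : ∀ i, L (φ i) = e i • φ i) (hψe : ∀ i, L (ψ i) = f i • ψ i)
    (k : Fin n) : f k ≤ e k := by
  by_contra hlt
  push_neg at hlt
  set c : Fin n → Fin n → ℝ := fun j i => ∑ x, ψ j x * φ i x * m x with hc
  have hexp : ∀ j, ψ j = ∑ i, c j i • φ i := fun j => on_expand m hn hpos φ hφ (ψ j)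
  have hrel : ∀ j i, c j i * (e i - f j) = 0 := by
    intro j i
    have h1 : L (ψ j) = ∑ i, (c j i * e i) • φ i := by
      conv_lhs => rw [hexp j]
      rw [map_sum]
      refine Finset.sum_congr rfl fun i _ => ?_
      rw [map_smul, hφe i, smul_smul]
    have h2 : L (ψ j) = ∑ i, (f j * c j i) • φ i := by
      rw [hψe j]
      conv_lhs => rw [hexp j]
      rw [Finset.smul_sum]
      exact Finset.sum_congr rfl fun i _ => by rw [smul_smul]
    have h3 : ∑ i, ((c j i * e i) - (f j * c j i)) • φ i = 0 := by
      simp_rw [sub_smul, Finset.sum_sub_distrib, ← h1, ← h2, sub_self]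
    have h4 := linearIndependent_iff'.mp (on_li m φ hφ) Finset.univ _ h3 i (Finset.mem_univ i)
    nlinarith [h4]
  have hzero : ∀ j, j ≤ k → ∀ i, k ≤ i → c j i = 0 := by
    intro j hj i hi
    have h1 : e i ≤ e k := he hi
    have h2 : f k ≤ f j := hf hj
    rcases mul_eq_zero.mp (hrel j i) with h | h
    · exact h
    · exfalso; nlinarith
  set S := Submodule.span ℝ (((Finset.Iio k).image φ : Finset (W → ℝ)) : Set (W → ℝ)) with hS
  have hmem : ∀ j, j ≤ k → ψ j ∈ S := by
    intro j hj
    rw [hexp j]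
    have heq : ∑ i, c j i • φ i = ∑ i ∈ Finset.Iio k, c j i • φ i := by
      refine (Finset.sum_subset (Finset.subset_univ _) ?_).symm
      intro i _ hi
      rw [hzero j hj i (by simpa [Finset.mem_Iio, not_lt] using hi)]
      simp
    rw [heq]
    refine Submodule.sum_mem _ fun i hi => Submodule.smul_mem _ _ ?_
    exact Submodule.subset_span (by exact_mod_cast Finset.mem_image_of_mem φ hi)
  haveI : FiniteDimensional ℝ S := FiniteDimensional.span_of_finite ℝ (Finset.finite_toSet _)
  have hli : LinearIndependent ℝ (fun j : {j : Fin n // j ≤ k} => (⟨ψ j.1, hmem j.1 j.2⟩ : S)) := by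
    apply LinearIndependent.of_comp S.subtype
    have hco : (S.subtype ∘ fun j : {j : Fin n // j ≤ k} => (⟨ψ j.1, hmem j.1 j.2⟩ : S))
        = (ψ ∘ (Subtype.val : {j : Fin n // j ≤ k} → Fin n)) := rfl
    rw [hco]
    exact (on_li m ψ hψ).comp Subtype.val Subtype.val_injective
  have h1 : Fintype.card {j : Fin n // j ≤ k} ≤ Module.finrank ℝ S :=
    hli.fintype_card_le_finrank
  have h2 : Module.finrank ℝ S ≤ (k : ℕ) := by
    refine le_trans (le_trans (finrank_span_finset_le_card _) Finset.card_image_le) ?_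
    simp
  have h3 : Fintype.card {j : Fin n // j ≤ k} = (k : ℕ) + 1 := by
    rw [Fintype.card_subtype]
    have hfe : Finset.univ.filter (fun j : Fin n => j ≤ k) = Finset.Iic k := by
      ext j; simp
    rw [hfe, Fin.card_Iic]
  omega

lemma eig_unique (m : W → ℝ) (hn : n = Fintype.card W) (hpos : 0 < n)
    (L : (W → ℝ) →ₗ[ℝ] (W → ℝ))
    (e f : Fin n → ℝ) (he : Antitone e) (hf : Antitone f)
    (φ ψ : Fin n → W → ℝ)
    (hφ : ∀ i j, (∑ x, φ i x * φ j x * m x) = if i = j then 1 else 0)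
    (hψ : ∀ i j, (∑ x, ψ i x * ψ j x * m x) = if i = j then 1 else 0)
    (hφe : ∀ i, L (φ i) = e i • φ i) (hψe : ∀ i, L (ψ i) = f i • ψ i) :
    e = f :=
  funext fun k => le_antisymm
    (eig_le m hn hpos L f e hf he ψ φ hψ hφ hψe hφe k)
    (eig_le m hn hpos L e f he hf φ ψ hφ hψ hφe hψe k)

end ON

section Graph

variable {V : Type*} [Fintype V] [DecidableEq V] (m : V → ℝ) (w : V → V → ℝ) (B : Finset V)

/-- The matrix of the operator `bop`. -/
def bmat (z y : {x : V // x ∉ B}) : ℝ :=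
  (1 / m z.1) * ∑ x ∈ B, w x z.1 * w x y.1 / (∑ y' : {x : V // x ∉ B}, w x y'.1)

lemma bop_mat (u : {x : V // x ∉ B} → ℝ) (z : {x : V // x ∉ B}) :
    bop m w B u z = ∑ y, bmat m w B z y * u y := by
  unfold bop bmat
  have h1 : ∀ x ∈ B, w x z.1 * ((∑ y : {x : V // x ∉ B}, u y * w x y.1) /
      (∑ y : {x : V // x ∉ B}, w x y.1))
      = ∑ y : {x : V // x ∉ B}, (w x z.1 * w x y.1 / (∑ y' : {x : V // x ∉ B}, w x y'.1)) * u y := by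
    intro x _
    rw [Finset.sum_div, Finset.mul_sum]
    exact Finset.sum_congr rfl fun y _ => by ring
  rw [Finset.sum_congr rfl h1, Finset.sum_comm, Finset.mul_sum]
  refine Finset.sum_congr rfl fun y _ => ?_
  simp only [Finset.mul_sum, Finset.sum_mul]
  exact Finset.sum_congr rfl fun x _ => by ring

lemma bop_lin {k : ℕ} (g : Fin k → ℝ) (v : Fin k → ({x : V // x ∉ B} → ℝ))
    (z : {x : V // x ∉ B}) :
    bop m w B (∑ i, g i • v i) z = ∑ i, g i * bop m w B (v i) z := by
  simp_rw [bop_mat]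
  have h1 : ∀ y, bmat m w B z y * (∑ i, g i • v i) y = ∑ i, g i * (bmat m w B z y * v i y) := by
    intro y
    rw [Finset.sum_apply, Finset.mul_sum]
    exact Finset.sum_congr rfl fun i _ => by simp; ring
  simp_rw [h1]
  rw [Finset.sum_comm]
  exact Finset.sum_congr rfl fun i _ => by rw [Finset.mul_sum]

lemma dlap_eq (hwsymm : ∀ x y, w x y = w y x) (u : {x : V // x ∉ B} → ℝ)
    (x : {x : V // x ∉ B}) :
    dlap m w B u x = nlap m w B u x - bop m w B u x := by
  have key : dlap m w B u x - nlap m w B u x = - bop m w B u x := by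
    unfold dlap nlap glap bop
    have hE : E0 B u x.1 = u x := by simp [E0, x.2]
    have hN : N0 w B u x.1 = u x := by simp [N0, x.2]
    rw [hE, hN, ← mul_sub, ← Finset.sum_sub_distrib]
    have h1 : ∀ y ∈ Finset.univ, (E0 B u y - u x) * w x.1 y - (N0 w B u y - u x) * w x.1 y
        = (E0 B u y - N0 w B u y) * w x.1 y := fun y _ => by ring
    rw [Finset.sum_congr rfl h1]
    have h2 : ∑ y, (E0 B u y - N0 w B u y) * w x.1 y
        = ∑ y ∈ B, (E0 B u y - N0 w B u y) * w x.1 y := by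
      refine (Finset.sum_subset (Finset.subset_univ _) ?_).symm
      intro y _ hy
      simp [E0, N0, hy]
    rw [h2, ← mul_neg, ← Finset.sum_neg_distrib]
    congr 1
    refine Finset.sum_congr rfl fun y hy => ?_
    rw [hwsymm y x.1]
    simp only [E0, N0, dif_pos hy]
    ring
  linarith [key]

lemma E0_add (u v : {x : V // x ∉ B} → ℝ) : E0 B (u + v) = E0 B u + E0 B v := by
  funext y
  simp only [E0, Pi.add_apply]
  split <;> simp

lemma E0_smul (a : ℝ) (u : {x : V // x ∉ B} → ℝ) : E0 B (a • u) = a • E0 B u := by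
  funext y
  simp only [E0, Pi.smul_apply, smul_eq_mul]
  split <;> simp

/-- The Dirichlet Laplacian as a linear map. -/
def dlapL : ({x : V // x ∉ B} → ℝ) →ₗ[ℝ] ({x : V // x ∉ B} → ℝ) where
  toFun := dlap m w B
  map_add' u v := by
    funext x
    simp only [dlap, glap, E0_add, Pi.add_apply]
    rw [← mul_add, ← Finset.sum_add_distrib]
    congr 1
    exact Finset.sum_congr rfl fun y _ => by ring
  map_smul' a u := by
    funext x
    simp only [dlap, glap, E0_smul, Pi.smul_apply, smul_eq_mul, RingHom.id_apply]
    simp only [Finset.mul_sum]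
    exact Finset.sum_congr rfl fun y _ => by ring

end Graph

theorem stmt_11 {V : Type*} [Fintype V] [DecidableEq V]
    (G : SimpleGraph V) (hconn : G.Connected)
    (m : V → ℝ) (hm : ∀ x, 0 < m x)
    (w : V → V → ℝ) (hwsymm : ∀ x y, w x y = w y x)
    (hwpos : ∀ x y, G.Adj x y → 0 < w x y)
    (hw0 : ∀ x y, ¬ G.Adj x y → w x y = 0)
    (B : Finset V) (hB : B.Nonempty)
    (hBB : ∀ x ∈ B, ∀ y ∈ B, ¬ G.Adj x y)
    (hBint : ∀ x ∈ B, ∃ y, y ∉ B ∧ G.Adj x y)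
    (ν : Fin (Fintype.card {x : V // x ∉ B}) → ℝ) (hνmono : Monotone ν)
    (hν : IsEigenBasis (fun x : {x : V // x ∉ B} => m x.1) (nlap m w B) (fun i => -(ν i)))
    (lam : Fin (Fintype.card {x : V // x ∉ B}) → ℝ) (hlammono : Monotone lam)
    (hlam : IsEigenBasis (fun x : {x : V // x ∉ B} => m x.1) (dlap m w B) (fun i => -(lam i)))
    (sq : Fin (Fintype.card {x : V // x ∉ B}) → ℝ) (hsqmono : Monotone sq)
    (hsq : IsEigenBasis (fun x : {x : V // x ∉ B} => m x.1) (bop m w B) sq)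
    :
    (∀ i : Fin (Fintype.card {x : V // x ∉ B}),
        ν i + sq ⟨0, (by obtain ⟨x0, hx0⟩ := hB; obtain ⟨y0, hy0, -⟩ := hBint x0 hx0; exact Fintype.card_pos_iff.mpr ⟨⟨y0, hy0⟩⟩)⟩ = lam i ∧ lam i = ν i + sq ⟨Fintype.card {x : V // x ∉ B} - 1, (by obtain ⟨x0, hx0⟩ := hB; obtain ⟨y0, hy0, -⟩ := hBint x0 hx0; have h0 : 0 < Fintype.card {x : V // x ∉ B} := Fintype.card_pos_iff.mpr ⟨⟨y0, hy0⟩⟩; omega)⟩) ↔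
      ((∀ x ∈ B, ∃! y : V, y ∉ B ∧ G.Adj x y) ∧
        (∀ z z' : {x : V // x ∉ B}, (∑ x ∈ B, w x z.1 ^ 2 / (m z.1 * ∑ y : {x : V // x ∉ B}, w x y.1)) = (∑ x ∈ B, w x z'.1 ^ 2 / (m z'.1 * ∑ y : {x : V // x ∉ B}, w x y.1))) ∧
        (∀ z : {x : V // x ∉ B}, ∃ x ∈ B, G.Adj x z.1)) := by
  classical
  obtain ⟨x0, hx0⟩ := hB
  obtain ⟨y0, hy0, hadj0⟩ := hBint x0 hx0
  have hpos : 0 < Fintype.card {x : V // x ∉ B} := Fintype.card_pos_iff.mpr ⟨⟨y0, hy0⟩⟩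
  have hwn : ∀ x y, 0 ≤ w x y := by
    intro x y
    by_cases h : G.Adj x y
    · exact (hwpos x y h).le
    · rw [hw0 x y h]
  have hwne : ∀ x y, w x y ≠ 0 → G.Adj x y := by
    intro x y h
    by_contra hadj
    exact h (hw0 x y hadj)
  have hD : ∀ x ∈ B, 0 < ∑ y : {x : V // x ∉ B}, w x y.1 := by
    intro x hx
    obtain ⟨y, hyB, hyadj⟩ := hBint x hx
    exact Finset.sum_pos' (fun y _ => hwn x y.1)
      ⟨⟨y, hyB⟩, Finset.mem_univ _, hwpos x y hyadj⟩
  have hdiag : ∀ z : {x : V // x ∉ B}, bmat m w B z z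
      = ∑ x ∈ B, w x z.1 ^ 2 / (m z.1 * ∑ y : {x : V // x ∉ B}, w x y.1) := by
    intro z
    unfold bmat
    rw [Finset.mul_sum]
    exact Finset.sum_congr rfl fun x _ => by ring
  constructor
  · -- forward direction
    intro H
    obtain ⟨ψ, hψon, hψe⟩ := hsq
    set c := sq ⟨0, hpos⟩ with hcdef
    have hab : sq ⟨0, hpos⟩ = sq ⟨Fintype.card {x : V // x ∉ B} - 1, by omega⟩ := by
      obtain ⟨h1, h2⟩ := H ⟨0, hpos⟩
      exact add_left_cancel (h1.trans h2)
    have hsqc : ∀ i, sq i = c := by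
      intro i
      refine le_antisymm ?_ (hsqmono (show (⟨0, hpos⟩ : Fin _) ≤ i from Fin.mk_le_of_le_val (Nat.zero_le _)))
      rw [hcdef, hab]
      refine hsqmono ?_
      have := i.isLt
      exact Fin.le_def.mpr (show i.1 ≤ Fintype.card {x : V // x ∉ B} - 1 by omega)
    have hbopc : ∀ (u : {x : V // x ∉ B} → ℝ) z, bop m w B u z = c * u z := by
      intro u z
      have hexp := on_expand (fun x : {x : V // x ∉ B} => m x.1) rfl hpos ψ hψon u
      conv_lhs => rw [hexp]
      rw [bop_lin]
      have h2 : ∀ i, bop m w B (ψ i) z = c * ψ i z := by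
        intro i
        rw [hψe i, hsqc i]
      simp_rw [h2]
      conv_rhs => rw [hexp]
      rw [Finset.sum_apply, Finset.mul_sum]
      exact Finset.sum_congr rfl fun i _ => by simp; ring
    have hmat : ∀ z y : {x : V // x ∉ B}, bmat m w B z y = if z = y then c else 0 := by
      intro z y
      have h := hbopc (Pi.single y (1 : ℝ) : {x : V // x ∉ B} → ℝ) z
      rw [bop_mat] at h
      have hL : ∑ y' : {x : V // x ∉ B}, bmat m w B z y' * (Pi.single y (1 : ℝ) : {x : V // x ∉ B} → ℝ) y'
          = bmat m w B z y := by
        simp [Pi.single_apply, mul_ite, mul_one, mul_zero, Finset.sum_ite_eq']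
      rw [hL] at h
      rw [h]
      rw [show (Pi.single y (1 : ℝ) : {x : V // x ∉ B} → ℝ) z = if z = y then 1 else 0 from Pi.single_apply y 1 z]
      split <;> simp
    have hoffw : ∀ z y : {x : V // x ∉ B}, z ≠ y → ∀ x ∈ B, w x z.1 * w x y.1 = 0 := by
      intro z y hzy x hx
      have h := hmat z y
      rw [if_neg hzy] at h
      unfold bmat at h
      have hm' : (1 / m z.1) ≠ 0 := by
        have := hm z.1
        positivity
      have hsum : ∑ x ∈ B, w x z.1 * w x y.1 / (∑ y' : {x : V // x ∉ B}, w x y'.1) = 0 := by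
        rcases mul_eq_zero.mp h with h' | h'
        · exact absurd h' hm'
        · exact h'
      have hterm := (Finset.sum_eq_zero_iff_of_nonneg (fun x hx' =>
        div_nonneg (mul_nonneg (hwn _ _) (hwn _ _)) (hD x hx').le)).mp hsum x hx
      rcases div_eq_zero_iff.mp hterm with h' | h'
      · exact h'
      · exact absurd h' (hD x hx).ne'
    refine ⟨?_, ?_, ?_⟩
    · -- unique interior neighbour
      intro x hx
      obtain ⟨y, hyB, hyadj⟩ := hBint x hx
      refine ⟨y, ⟨hyB, hyadj⟩, ?_⟩
      rintro y' ⟨hy'B, hy'adj⟩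
      by_contra hne
      have hzy : (⟨y', hy'B⟩ : {x : V // x ∉ B}) ≠ ⟨y, hyB⟩ := by
        simp only [ne_eq, Subtype.mk.injEq]
        exact hne
      have h := hoffw ⟨y', hy'B⟩ ⟨y, hyB⟩ hzy x hx
      have h1 := hwpos x y' hy'adj
      have h2 := hwpos x y hyadj
      nlinarith
    · -- constant diagonal
      intro z z'
      rw [← hdiag z, ← hdiag z', hmat z z, hmat z' z']
      simp
    · -- every interior vertex has a boundary neighbour
      have hcpos : 0 < c := by
        have h := hmat ⟨y0, hy0⟩ ⟨y0, hy0⟩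
        rw [if_pos rfl] at h
        rw [← h]
        unfold bmat
        refine mul_pos (by have := hm y0; positivity) ?_
        refine Finset.sum_pos' (fun x hx' =>
          div_nonneg (mul_nonneg (hwn _ _) (hwn _ _)) (hD x hx').le) ?_
        exact ⟨x0, hx0, div_pos (mul_pos (hwpos x0 y0 hadj0) (hwpos x0 y0 hadj0)) (hD x0 hx0)⟩
      intro z
      by_contra hno
      push_neg at hno
      have hz0 : ∀ x ∈ B, w x z.1 * w x z.1 / (∑ y' : {x : V // x ∉ B}, w x y'.1) = 0 := by
        intro x hx
        rw [hw0 x z.1 (hno x hx)]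
        simp
      have hbz : bmat m w B z z = 0 := by
        unfold bmat
        rw [Finset.sum_eq_zero hz0, mul_zero]
      rw [hmat z z, if_pos rfl] at hbz
      linarith
  · -- backward direction
    rintro ⟨h1, h2, -⟩
    set z0 : {x : V // x ∉ B} := ⟨y0, hy0⟩ with hz0def
    set c := ∑ x ∈ B, w x z0.1 ^ 2 / (m z0.1 * ∑ y : {x : V // x ∉ B}, w x y.1) with hcdef
    have hcz : ∀ z : {x : V // x ∉ B},
        (∑ x ∈ B, w x z.1 ^ 2 / (m z.1 * ∑ y : {x : V // x ∉ B}, w x y.1)) = c := fun z => h2 z z0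
    have houni : ∀ x ∈ B, ∀ z y : {x : V // x ∉ B}, w x z.1 ≠ 0 → w x y.1 ≠ 0 → z = y := by
      intro x hx z y hz hy
      obtain ⟨yy, -, huni⟩ := h1 x hx
      have e1 : z.1 = yy := huni z.1 ⟨z.2, hwne x z.1 hz⟩
      have e2 : y.1 = yy := huni y.1 ⟨y.2, hwne x y.1 hy⟩
      exact Subtype.ext (e1.trans e2.symm)
    have hmat : ∀ z y : {x : V // x ∉ B}, bmat m w B z y = if z = y then c else 0 := by
      intro z y
      by_cases hzy : z = y
      · rw [if_pos hzy, ← hzy, hdiag z, hcz z]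
      · rw [if_neg hzy]
        unfold bmat
        rw [Finset.sum_eq_zero, mul_zero]
        intro x hx
        have : w x z.1 * w x y.1 = 0 := by
          by_contra hc
          rcases mul_ne_zero_iff.mp hc with ⟨ha, hb⟩
          exact hzy (houni x hx z y ha hb)
        rw [this, zero_div]
    have hbopc : ∀ (u : {x : V // x ∉ B} → ℝ) z, bop m w B u z = c * u z := by
      intro u z
      rw [bop_mat]
      simp_rw [hmat]
      simp [ite_mul, Finset.sum_ite_eq]
    have hsqc : ∀ i, sq i = c := by
      obtain ⟨ψ, hψon, hψe⟩ := hsq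
      intro i
      have hne : ∃ x, ψ i x ≠ 0 := by
        by_contra hz
        push_neg at hz
        have := hψon i i
        simp [hz] at this
      obtain ⟨x, hx⟩ := hne
      have h := congrFun (hψe i) x
      rw [hbopc (ψ i) x] at h
      exact (mul_right_cancel₀ hx h).symm
    have hlamc : ∀ i, lam i = ν i + c := by
      obtain ⟨φ, hφon, hφe⟩ := hν
      obtain ⟨χ, hχon, hχe⟩ := hlam
      have hde : ∀ i, dlapL m w B (φ i) = (-(ν i + c)) • φ i := by
        intro i
        funext x
        show dlap m w B (φ i) x = _
        rw [dlap_eq m w B hwsymm, congrFun (hφe i) x, hbopc (φ i) x]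
        simp only [Pi.smul_apply, smul_eq_mul]
        ring
      have hde2 : ∀ i, dlapL m w B (χ i) = (-(lam i)) • χ i := by
        intro i
        funext x
        show dlap m w B (χ i) x = _
        rw [congrFun (hχe i) x]
        simp only [Pi.smul_apply, smul_eq_mul]
      have hanti1 : Antitone (fun i => -(ν i + c)) := by
        intro a b hab
        have := hνmono hab
        simp only [neg_add_rev]
        linarith
      have hanti2 : Antitone (fun i => -(lam i)) := by
        intro a b hab
        have := hlammono hab
        simp only
        linarith
      have heq := eig_unique (fun x : {x : V // x ∉ B} => m x.1) rfl hpos (dlapL m w B)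
        (fun i => -(ν i + c)) (fun i => -(lam i)) hanti1 hanti2 φ χ hφon hχon hde hde2
      intro i
      have := congrFun heq i
      linarith
    intro i
    constructor
    · rw [hsqc, hlamc]
    · rw [hsqc, hlamc]
end
end
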